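/- arXiv:2602.16465 — 2 statements merged into one kernel-verified Lean document; each statement's English description precedes it below -/
import Mathlib

section
/- Assume p_j = 1 for all j ∈ [m]. Then the optimal value of the two-stage robust representative selection problem with continuous budgeted uncertainty, min_{x∈X'} ( Σ_{i=1}^n C_i x_i + max_{c∈U^C} min_{y∈Y(x)} Σ_{i=1}^n c_i y_i ), equals inf_{π≥0} ( Γπ + Σ_{j=1}^m min{ min_{k∈T_j} C_k , f_j(π) } ), where f_j(π) is the optimal value of: minimize Σ_{i∈T_j} c̲_i y_i + Σ_{i∈T_j} ρ_i subject to Σ_{i∈T_j} y_i = 1, π + ρ_i ≥ d_i y_i for all i ∈ T_j, y ∈ [0,1]^{T_j}, ρ ∈ R_{≥0}^{T_j}. -/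
open Classical
noncomputable section

/-- `x` is a 0-1 vector. -/
def IsBinary {n : ℕ} (x : Fin n → ℝ) : Prop := ∀ i, x i = 0 ∨ x i = 1

/-- The bucket `T_j` of the partition given by `t`. -/
def bucket {n m : ℕ} (t : Fin n → Fin m) (j : Fin m) : Finset (Fin n) :=
  Finset.univ.filter (fun i => t i = j)

/-- The set `X'` of feasible first-stage decisions (representative selection: `p_j = 1`). -/
def FeasX {n m : ℕ} (t : Fin n → Fin m) (x : Fin n → ℝ) : Prop :=
  IsBinary x ∧ ∀ j, ∑ i ∈ bucket t j, x i ≤ 1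

/-- The set `Y(x)` of feasible (binary) second-stage decisions (with `p_j = 1`). -/
def FeasY {n m : ℕ} (t : Fin n → Fin m) (x y : Fin n → ℝ) : Prop :=
  IsBinary y ∧ (∀ j, ∑ i ∈ bucket t j, (x i + y i) = 1) ∧ ∀ i, x i + y i ≤ 1

/-- The continuous budgeted uncertainty set `U^C`. -/
def UC {n : ℕ} (cl d : Fin n → ℝ) (Γ : ℝ) : Set (Fin n → ℝ) :=
  {c | ∃ δ : Fin n → ℝ, (∀ i, 0 ≤ δ i ∧ δ i ≤ 1) ∧
    (∀ i, c i = cl i + d i * δ i) ∧ ∑ i, δ i ≤ Γ}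

/-- `f_j(π)`: the optimal value of
`min ∑_{i∈T_j} c̲_i y_i + ∑_{i∈T_j} ρ_i` s.t. `∑_{i∈T_j} y_i = 1`, `π + ρ_i ≥ d_i y_i`
for `i ∈ T_j`, `y ∈ [0,1]^{T_j}`, `ρ ≥ 0`. -/
def fj {n m : ℕ} (t : Fin n → Fin m) (cl d : Fin n → ℝ) (j : Fin m) (π : ℝ) : ℝ :=
  sInf {v | ∃ y ρ : Fin n → ℝ,
    (∀ i, t i = j → (0 ≤ y i ∧ y i ≤ 1 ∧ 0 ≤ ρ i ∧ d i * y i ≤ π + ρ i)) ∧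
    (∑ i ∈ bucket t j, y i = 1) ∧
    v = ∑ i ∈ bucket t j, (cl i * y i + ρ i)}


/-- Distribution lemma: choose `y` between `lo` and `hi` on `T` with prescribed sum. -/
lemma distrib {ι : Type*} [DecidableEq ι] (T : Finset ι) :
    ∀ (r : ℝ) (lo hi : ι → ℝ), (∀ i ∈ T, lo i ≤ hi i) →
    (∑ i ∈ T, lo i) ≤ r → r ≤ (∑ i ∈ T, hi i) →
    ∃ y : ι → ℝ, (∀ i ∈ T, lo i ≤ y i ∧ y i ≤ hi i) ∧ (∑ i ∈ T, y i) = r := by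
  induction T using Finset.induction_on with
  | empty =>
    intro r lo hi _ h1 h2
    simp only [Finset.sum_empty] at h1 h2 ⊢
    exact ⟨fun _ => 0, by simp, le_antisymm h1 h2⟩
  | insert a s ha ih =>
    intro r lo hi hlh h1 h2
    rw [Finset.sum_insert ha] at h1 h2
    set A := ∑ i ∈ s, lo i with hA
    set B := ∑ i ∈ s, hi i with hB
    have hAB : A ≤ B := Finset.sum_le_sum fun i hi' => hlh i (Finset.mem_insert_of_mem hi')
    have hla : lo a ≤ hi a := hlh a (Finset.mem_insert_self a s)
    set ya := max (lo a) (min (hi a) (r - A)) with hya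
    have hya1 : lo a ≤ ya := le_max_left _ _
    have hya2 : ya ≤ hi a := max_le hla (min_le_left _ _)
    have key : A ≤ r - ya ∧ r - ya ≤ B := by
      rcases le_total (min (hi a) (r - A)) (lo a) with h | h
      · have hya' : ya = lo a := max_eq_left h
        constructor
        · linarith
        · rcases le_total (hi a) (r - A) with h' | h'
          · rw [min_eq_left h'] at h; linarith
          · rw [min_eq_right h'] at h; linarith
      · have hya' : ya = min (hi a) (r - A) := max_eq_right h
        rcases le_total (hi a) (r - A) with h' | h'
        · rw [min_eq_left h'] at hya'
          constructor <;> linarith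
        · rw [min_eq_right h'] at hya'
          constructor <;> linarith
    obtain ⟨y, hy, hsy⟩ := ih (r - ya) lo hi
      (fun i hi' => hlh i (Finset.mem_insert_of_mem hi')) key.1 key.2
    refine ⟨Function.update y a ya, ?_, ?_⟩
    · intro i hi'
      rcases Finset.mem_insert.mp hi' with rfl | hi'
      · simp [hya1, hya2]
      · have : i ≠ a := ne_of_mem_of_not_mem hi' ha
        simp only [Function.update_of_ne this]
        exact hy i hi'
    · rw [Finset.sum_insert ha, Function.update_self]
      have : ∑ i ∈ s, Function.update y a ya i = ∑ i ∈ s, y i := by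
        apply Finset.sum_congr rfl
        intro i hi'
        exact Function.update_of_ne (ne_of_mem_of_not_mem hi' ha) _ _
      rw [this, hsy]; ring

lemma bucket_duality {n : ℕ} (T : Finset (Fin n)) (hT : T.Nonempty)
    (cl d : Fin n → ℝ) (hcl : ∀ i, 0 ≤ cl i) (hd : ∀ i, 0 ≤ d i) (π : ℝ) (hπ : 0 ≤ π) :
    ∃ δ y ρ : Fin n → ℝ,
      (∀ i, 0 ≤ δ i ∧ δ i ≤ 1) ∧ (∀ i, i ∉ T → δ i = 0) ∧
      (∀ i ∈ T, 0 ≤ y i ∧ y i ≤ 1 ∧ 0 ≤ ρ i ∧ d i * y i ≤ π + ρ i) ∧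
      (∑ i ∈ T, y i = 1) ∧
      (∑ i ∈ T, (cl i * y i + ρ i)) ≤
        (T.inf' hT fun i => cl i + d i * δ i) - π * ∑ i ∈ T, δ i := by
  -- capacities
  set cap : Fin n → ℝ := fun i => if d i = 0 then 1 else min 1 (π / d i) with hcapdef
  have hcap : ∀ i, 0 ≤ cap i ∧ cap i ≤ 1 := by
    intro i
    simp only [hcapdef]
    split_ifs with h
    · exact ⟨zero_le_one, le_refl 1⟩
    · have hdi : 0 < d i := lt_of_le_of_ne (hd i) (Ne.symm h)
      exact ⟨le_min zero_le_one (div_nonneg hπ hdi.le), min_le_left _ _⟩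
  -- slope set
  set Sl : Finset ℝ := T.image cl ∪ T.image (fun i => cl i + d i) with hSldef
  set hif : ℝ → Fin n → ℝ := fun s i =>
    (if cl i ≤ s then cap i else 0) + (if cl i + d i ≤ s then 1 - cap i else 0) with hifdef
  set lof : ℝ → Fin n → ℝ := fun s i =>
    (if cl i < s then cap i else 0) + (if cl i + d i < s then 1 - cap i else 0) with lofdef
  have hif_nonneg : ∀ s i, 0 ≤ hif s i := by
    intro s i
    simp only [hifdef]
    have := hcap i
    split_ifs <;> linarith
  have hif_le_one : ∀ s i, hif s i ≤ 1 := by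
    intro s i
    simp only [hifdef]
    have := hcap i
    split_ifs <;> linarith
  have hSlne : Sl.Nonempty := by
    obtain ⟨i, hi⟩ := hT
    exact ⟨cl i, Finset.mem_union_left _ (Finset.mem_image_of_mem cl hi)⟩
  have hclSl : ∀ i ∈ T, cl i ∈ Sl := fun i hi =>
    Finset.mem_union_left _ (Finset.mem_image_of_mem cl hi)
  have hcdSl : ∀ i ∈ T, cl i + d i ∈ Sl := fun i hi =>
    Finset.mem_union_right _ (Finset.mem_image_of_mem _ hi)
  set filt : Finset ℝ := Sl.filter (fun s => 1 ≤ ∑ i ∈ T, hif s i) with hfiltdef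
  have hfiltne : filt.Nonempty := by
    refine ⟨Sl.max' hSlne, Finset.mem_filter.mpr ⟨Sl.max'_mem hSlne, ?_⟩⟩
    have hone : ∀ i ∈ T, hif (Sl.max' hSlne) i = 1 := by
      intro i hi
      have h1 : cl i ≤ Sl.max' hSlne := Finset.le_max' _ _ (hclSl i hi)
      have h2 : cl i + d i ≤ Sl.max' hSlne := Finset.le_max' _ _ (hcdSl i hi)
      simp only [hifdef, if_pos h1, if_pos h2]; ring
    rw [Finset.sum_congr rfl hone]
    simp only [Finset.sum_const, nsmul_eq_mul, mul_one]
    have : 1 ≤ T.card := Finset.card_pos.mpr hT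
    exact_mod_cast this
  set σ : ℝ := filt.min' hfiltne with hσdef
  have hσfilt : σ ∈ filt := filt.min'_mem hfiltne
  have hσSl : σ ∈ Sl := (Finset.mem_filter.mp hσfilt).1
  have hσ1 : 1 ≤ ∑ i ∈ T, hif σ i := (Finset.mem_filter.mp hσfilt).2
  have hmin : ∀ s ∈ Sl, 1 ≤ ∑ i ∈ T, hif s i → σ ≤ s := by
    intro s hs h1
    exact filt.min'_le s (Finset.mem_filter.mpr ⟨hs, h1⟩)
  -- single term ≥ 1 forces membership
  have hsingle : ∀ s ∈ Sl, ∀ i ∈ T, 1 ≤ hif s i → σ ≤ s := by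
    intro s hs i hi h1
    apply hmin s hs
    calc (1:ℝ) ≤ hif s i := h1
    _ ≤ ∑ k ∈ T, hif s k := Finset.single_le_sum (fun k _ => hif_nonneg s k) hi
  -- K1
  have K1 : ∀ i ∈ T, σ ≤ cl i + d i := by
    intro i hi
    apply hsingle _ (hcdSl i hi) i hi
    have h1 : cl i ≤ cl i + d i := by linarith [hd i]
    simp only [hifdef, if_pos h1, if_pos (le_refl (cl i + d i))]
    linarith
  -- K2
  have K2 : ∑ i ∈ T, lof σ i ≤ 1 := by
    set B : Finset ℝ := Sl.filter (fun s => s < σ) with hBdef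
    rcases B.eq_empty_or_nonempty with hB | hB
    · have : ∀ i ∈ T, lof σ i = 0 := by
        intro i hi
        have h1 : ¬ cl i < σ := by
          intro h
          have : cl i ∈ B := Finset.mem_filter.mpr ⟨hclSl i hi, h⟩
          rw [hB] at this; exact absurd this (Finset.notMem_empty _)
        have h2 : ¬ cl i + d i < σ := by
          intro h
          have : cl i + d i ∈ B := Finset.mem_filter.mpr ⟨hcdSl i hi, h⟩
          rw [hB] at this; exact absurd this (Finset.notMem_empty _)
        simp only [lofdef, if_neg h1, if_neg h2, add_zero]
      rw [Finset.sum_congr rfl this]; simp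
    · set s₀ : ℝ := B.max' hB with hs₀def
      have hs₀B : s₀ ∈ B := B.max'_mem hB
      have hs₀Sl : s₀ ∈ Sl := (Finset.mem_filter.mp hs₀B).1
      have hs₀lt : s₀ < σ := (Finset.mem_filter.mp hs₀B).2
      have hiff : ∀ u ∈ Sl, (u < σ ↔ u ≤ s₀) := by
        intro u hu
        constructor
        · intro h; exact B.le_max' u (Finset.mem_filter.mpr ⟨hu, h⟩)
        · intro h; exact lt_of_le_of_lt h hs₀lt
      have heq : ∀ i ∈ T, lof σ i = hif s₀ i := by
        intro i hi
        simp only [lofdef, hifdef]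
        congr 1
        · by_cases h : cl i < σ
          · rw [if_pos h, if_pos ((hiff _ (hclSl i hi)).mp h)]
          · rw [if_neg h, if_neg (fun h' => h ((hiff _ (hclSl i hi)).mpr h'))]
        · by_cases h : cl i + d i < σ
          · rw [if_pos h, if_pos ((hiff _ (hcdSl i hi)).mp h)]
          · rw [if_neg h, if_neg (fun h' => h ((hiff _ (hcdSl i hi)).mpr h'))]
      rw [Finset.sum_congr rfl heq]
      by_contra hcon
      push_neg at hcon
      exact absurd (hmin s₀ hs₀Sl hcon.le) (not_le.mpr hs₀lt)
  -- get y
  have hlohi : ∀ i ∈ T, lof σ i ≤ hif σ i := by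
    intro i hi
    simp only [lofdef, hifdef]
    have := hcap i
    gcongr ?_ + ?_ <;> split_ifs <;> first | linarith | rfl
  obtain ⟨y, hy, hysum⟩ := distrib T 1 (lof σ) (hif σ) hlohi K2 hσ1
  have hlof_nonneg : ∀ i, 0 ≤ lof σ i := by
    intro i
    simp only [lofdef]
    have := hcap i
    split_ifs <;> linarith
  have hy0 : ∀ i ∈ T, 0 ≤ y i := fun i hi => le_trans (hlof_nonneg i) (hy i hi).1
  have hy1 : ∀ i ∈ T, y i ≤ 1 := fun i hi => le_trans (hy i hi).2 (hif_le_one σ i)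
  -- δ and ρ
  set δ : Fin n → ℝ := fun i =>
    if i ∈ T then (if d i = 0 then 0 else max 0 (min 1 ((σ - cl i)/d i))) else 0 with hδdef
  set ρ : Fin n → ℝ := fun i => max (d i * y i - π) 0 with hρdef
  have hδ01 : ∀ i, 0 ≤ δ i ∧ δ i ≤ 1 := by
    intro i
    simp only [hδdef]
    split_ifs <;>
      simp [le_max_iff, max_le_iff, zero_le_one, min_le_left]
  have hρ0 : ∀ i, 0 ≤ ρ i := fun i => le_max_right _ _
  -- V3 : ρ i ≤ δ i * (d i * y i - π)
  have V3 : ∀ i ∈ T, ρ i ≤ δ i * (d i * y i - π) := by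
    intro i hi
    rcases le_or_gt (d i * y i) π with hle | hgt
    · have hρz : ρ i = 0 := max_eq_right (by linarith)
      rw [hρz]
      rcases eq_or_lt_of_le (hδ01 i).1 with hδz | hδpos
      · rw [← hδz]; simp
      · -- δ i > 0
        have hdne : d i ≠ 0 := by
          intro h
          simp only [hδdef, if_pos hi, if_pos h] at hδpos
          exact lt_irrefl _ hδpos
        have hdpos : 0 < d i := lt_of_le_of_ne (hd i) (Ne.symm hdne)
        have hclσ : cl i < σ := by
          by_contra hcon
          push_neg at hcon
          have : (σ - cl i)/d i ≤ 0 := div_nonpos_of_nonpos_of_nonneg (by linarith) hdpos.le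
          simp only [hδdef, if_pos hi, if_neg hdne] at hδpos
          have : max 0 (min 1 ((σ - cl i)/d i)) = 0 := by
            rw [max_eq_left]
            exact le_trans (min_le_right _ _) this
          rw [this] at hδpos
          exact lt_irrefl _ hδpos
        have hycap : cap i ≤ y i := by
          have : cap i ≤ lof σ i := by
            simp only [lofdef, if_pos hclσ]
            split_ifs with h
            · have := hcap i; linarith
            · simp
          linarith [(hy i hi).1]
        rcases le_or_gt (π / d i) 1 with hc1 | hc1
        · have hcapv : cap i = π / d i := by
            simp only [hcapdef, if_neg hdne]; exact min_eq_right hc1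
          have : π ≤ d i * y i := by
            rw [hcapv] at hycap
            calc π = d i * (π / d i) := by field_simp
            _ ≤ d i * y i := by exact mul_le_mul_of_nonneg_left hycap hdpos.le
          have heq : d i * y i = π := le_antisymm hle this
          rw [heq]; simp
        · -- cap i = 1, contradiction with minimality
          exfalso
          have hcapv : cap i = 1 := by
            simp only [hcapdef, if_neg hdne]; exact min_eq_left hc1.le
          have : σ ≤ cl i := by
            apply hsingle _ (hclSl i hi) i hi
            simp only [hifdef, if_pos (le_refl (cl i))]
            rw [hcapv]
            split_ifs <;> linarith
          linarith
    · -- d i * y i > π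
      have hρv : ρ i = d i * y i - π := max_eq_left (by linarith)
      have hdpos : 0 < d i := by
        rcases eq_or_lt_of_le (hd i) with h | h
        · exfalso; rw [← h] at hgt; simp at hgt; linarith
        · exact h
      have hcdσ : cl i + d i ≤ σ := by
        by_contra hcon
        push_neg at hcon
        have hhi : hif σ i ≤ cap i := by
          simp only [hifdef, if_neg (not_le.mpr hcon)]
          split_ifs with h
          · simp
          · simp [hcap i |>.1]
        have hcaple : cap i ≤ π / d i := by
          simp only [hcapdef, if_neg hdpos.ne']
          exact min_le_right _ _
        have : y i ≤ π / d i := le_trans (le_trans (hy i hi).2 hhi) hcaple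
        have : d i * y i ≤ π := by
          calc d i * y i ≤ d i * (π / d i) := mul_le_mul_of_nonneg_left this hdpos.le
          _ = π := by field_simp
        linarith
      have hσeq : σ = cl i + d i := le_antisymm (K1 i hi) hcdσ
      have hδ1 : δ i = 1 := by
        simp only [hδdef, if_pos hi, if_neg hdpos.ne', hσeq]
        have : (cl i + d i - cl i)/d i = 1 := by field_simp; ring
        rw [this]; simp
      rw [hδ1, hρv]; simp
  -- V4
  have V4 : ∀ i ∈ T, (cl i + d i * δ i) * y i = σ * y i := by
    intro i hi
    rcases eq_or_lt_of_le (hy0 i hi) with hyz | hypos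
    · rw [← hyz]; ring
    · have hhipos : 0 < hif σ i := lt_of_lt_of_le hypos (hy i hi).2
      have hclσ : cl i ≤ σ := by
        by_contra hcon
        push_neg at hcon
        have h2 : ¬ cl i + d i ≤ σ := by
          intro h; linarith [hd i]
        simp only [hifdef, if_neg (not_le.mpr hcon), if_neg h2] at hhipos
        linarith
      rcases eq_or_lt_of_le (hd i) with hdz | hdpos
      · have hσeq : σ = cl i := le_antisymm (by linarith [K1 i hi]) hclσ
        simp only [hδdef, if_pos hi, if_neg, ← hdz]
        · rw [hσeq]; ring
      · have hδv : δ i = (σ - cl i)/d i := by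
          simp only [hδdef, if_pos hi, if_neg hdpos.ne']
          rw [min_eq_right, max_eq_right]
          · exact div_nonneg (by linarith) hdpos.le
          · rw [div_le_one hdpos]; linarith [K1 i hi]
        rw [hδv]
        field_simp
        ring
    
  -- V5
  have V5 : ∀ i ∈ T, σ ≤ cl i + d i * δ i := by
    intro i hi
    rcases eq_or_lt_of_le (hd i) with hdz | hdpos
    · have := K1 i hi; rw [← hdz] at this ⊢; linarith
    · simp only [hδdef, if_pos hi, if_neg hdpos.ne']
      rcases le_or_gt σ (cl i) with h | h
      · have : 0 ≤ d i * max 0 (min 1 ((σ - cl i)/d i)) := by positivity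
        linarith
      · have hδv : max 0 (min 1 ((σ - cl i)/d i)) = (σ - cl i)/d i := by
          rw [min_eq_right, max_eq_right]
          · exact div_nonneg (by linarith) hdpos.le
          · rw [div_le_one hdpos]; linarith [K1 i hi]
        rw [hδv]
        field_simp
        linarith
  refine ⟨δ, y, ρ, hδ01, ?_, ?_, hysum, ?_⟩
  · intro i hi; simp only [hδdef, if_neg hi]
  · intro i hi
    exact ⟨hy0 i hi, hy1 i hi, hρ0 i, by linarith [le_max_left (d i * y i - π) 0]⟩
  · have hinf : σ ≤ T.inf' hT fun i => cl i + d i * δ i := by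
      apply Finset.le_inf'
      exact V5
    have step1 : ∑ i ∈ T, (cl i * y i + ρ i) ≤ ∑ i ∈ T, ((cl i + d i * δ i) * y i - π * δ i) := by
      apply Finset.sum_le_sum
      intro i hi
      have := V3 i hi
      nlinarith [this]
    have step2 : ∑ i ∈ T, ((cl i + d i * δ i) * y i - π * δ i)
        = σ - π * ∑ i ∈ T, δ i := by
      rw [Finset.sum_sub_distrib, Finset.sum_congr rfl V4, ← Finset.mul_sum,
        ← Finset.mul_sum, hysum, mul_one]
    calc ∑ i ∈ T, (cl i * y i + ρ i) ≤ σ - π * ∑ i ∈ T, δ i := by rw [← step2]; exact step1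
    _ ≤ (T.inf' hT fun i => cl i + d i * δ i) - π * ∑ i ∈ T, δ i := by linarith

section FV
variable {n m : ℕ} (t : Fin n → Fin m) (cl d : Fin n → ℝ)
  (hne : ∀ j : Fin m, (bucket t j).Nonempty)

/-- adversary's value for a given deviation `δ`, over buckets in `J`. -/
def GG (J : Finset (Fin m)) (δ : Fin n → ℝ) : ℝ :=
  ∑ j ∈ J, (bucket t j).inf' (hne j) fun i => cl i + d i * δ i

lemma mem_bucket {i : Fin n} {j : Fin m} : i ∈ bucket t j ↔ t i = j := by
  simp [bucket]

lemma GG_nonneg (hcl : ∀ i, 0 ≤ cl i) (hd : ∀ i, 0 ≤ d i) (J : Finset (Fin m))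
    (δ : Fin n → ℝ) (hδ : ∀ i, 0 ≤ δ i) : 0 ≤ GG t cl d hne J δ := by
  apply Finset.sum_nonneg
  intro j _
  apply Finset.le_inf'
  intro i _
  have := mul_nonneg (hd i) (hδ i)
  linarith [hcl i]

lemma sum_pick_le {J : Finset (Fin m)} (f : Fin n → ℝ) (hf : ∀ i, 0 ≤ f i)
    (pick : Fin m → Fin n) (hpick : ∀ j, pick j ∈ bucket t j) :
    ∑ j ∈ J, f (pick j) ≤ ∑ i, f i := by
  have hinj : Set.InjOn pick J := by
    intro a _ b _ hab
    have ha := (mem_bucket t).mp (hpick a)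
    have hb := (mem_bucket t).mp (hpick b)
    rw [← ha, ← hb, hab]
  rw [← Finset.sum_image hinj]
  exact Finset.sum_le_sum_of_subset_of_nonneg (Finset.subset_univ _)
    (fun i _ _ => hf i)

lemma GG_le_M (hcl : ∀ i, 0 ≤ cl i) (hd : ∀ i, 0 ≤ d i) (J : Finset (Fin m))
    (δ : Fin n → ℝ) (hδ : ∀ i, δ i ≤ 1) :
    GG t cl d hne J δ ≤ ∑ i, (cl i + d i) := by
  have key : ∀ j ∈ J, ((bucket t j).inf' (hne j) fun i => cl i + d i * δ i)
      ≤ cl ((hne j).choose) + d ((hne j).choose) := by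
    intro j _
    calc ((bucket t j).inf' (hne j) fun i => cl i + d i * δ i)
        ≤ cl ((hne j).choose) + d ((hne j).choose) * δ ((hne j).choose) :=
          Finset.inf'_le _ (hne j).choose_spec
    _ ≤ cl ((hne j).choose) + d ((hne j).choose) := by
          have h1 := hd ((hne j).choose)
          have h2 := hδ ((hne j).choose)
          nlinarith
  calc GG t cl d hne J δ ≤ ∑ j ∈ J, (cl ((hne j).choose) + d ((hne j).choose)) :=
        Finset.sum_le_sum key
  _ ≤ ∑ i, (cl i + d i) := by
        exact sum_pick_le t (fun i => cl i + d i)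
          (fun i => add_nonneg (hcl i) (hd i)) _ (fun j => (hne j).choose_spec)

/-- the feasible value set of the adversary with budget `b`. -/
def FSet (J : Finset (Fin m)) (b : ℝ) : Set ℝ :=
  {g | ∃ δ : Fin n → ℝ, (∀ i, 0 ≤ δ i ∧ δ i ≤ 1) ∧ (∑ i, δ i) ≤ b ∧
    g = GG t cl d hne J δ}

lemma FSet_nonempty (J : Finset (Fin m)) {b : ℝ} (hb : 0 ≤ b) :
    (FSet t cl d hne J b).Nonempty :=
  ⟨GG t cl d hne J (fun _ => 0), fun _ => 0, fun _ => ⟨le_refl _, zero_le_one⟩,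
    by simpa using hb, rfl⟩

lemma FSet_bddAbove (hcl : ∀ i, 0 ≤ cl i) (hd : ∀ i, 0 ≤ d i)
    (J : Finset (Fin m)) (b : ℝ) : BddAbove (FSet t cl d hne J b) := by
  refine ⟨∑ i, (cl i + d i), ?_⟩
  rintro g ⟨δ, hδ, _, rfl⟩
  exact GG_le_M t cl d hne hcl hd J δ (fun i => (hδ i).2)

def Fv (J : Finset (Fin m)) (b : ℝ) : ℝ := sSup (FSet t cl d hne J b)

lemma Fv_mono (hcl : ∀ i, 0 ≤ cl i) (hd : ∀ i, 0 ≤ d i) (J : Finset (Fin m))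
    {a b : ℝ} (ha : 0 ≤ a) (hab : a ≤ b) :
    Fv t cl d hne J a ≤ Fv t cl d hne J b := by
  apply csSup_le_csSup (FSet_bddAbove t cl d hne hcl hd J b)
    (FSet_nonempty t cl d hne J ha)
  rintro g ⟨δ, h1, h2, rfl⟩
  exact ⟨δ, h1, le_trans h2 hab, rfl⟩

lemma GG_lipschitz (hd : ∀ i, 0 ≤ d i) (J : Finset (Fin m))
    (δ δ' : Fin n → ℝ) (hle : ∀ i, δ' i ≤ δ i) :
    GG t cl d hne J δ ≤ GG t cl d hne J δ' + (∑ i, d i) * ((∑ i, δ i) - (∑ i, δ' i)) := by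
  set D := ∑ i, d i with hD
  have hDd : ∀ i, d i ≤ D := by
    intro i
    rw [hD]
    exact Finset.single_le_sum (fun k _ => hd k) (Finset.mem_univ i)
  -- per-bucket argmin for δ'
  have key : ∀ j ∈ J, ∃ k ∈ bucket t j,
      ((bucket t j).inf' (hne j) fun i => cl i + d i * δ i)
        ≤ ((bucket t j).inf' (hne j) fun i => cl i + d i * δ' i) + d k * (δ k - δ' k) := by
    intro j _
    obtain ⟨k, hk, hkeq⟩ := Finset.exists_mem_eq_inf' (hne j)
      (fun i => cl i + d i * δ' i)
    refine ⟨k, hk, ?_⟩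
    have h1 : ((bucket t j).inf' (hne j) fun i => cl i + d i * δ i) ≤ cl k + d k * δ k :=
      Finset.inf'_le _ hk
    have : cl k + d k * δ k = (cl k + d k * δ' k) + d k * (δ k - δ' k) := by ring
    rw [this] at h1
    rw [hkeq]
    exact h1
  choose pick hpick hpickle using key
  -- now sum
  have step : GG t cl d hne J δ ≤ GG t cl d hne J δ' +
      ∑ j ∈ J.attach, d (pick j.1 j.2) * (δ (pick j.1 j.2) - δ' (pick j.1 j.2)) := by
    unfold GG
    rw [← Finset.sum_attach J (fun j => (bucket t j).inf' (hne j) fun i => cl i + d i * δ i),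
      ← Finset.sum_attach J (fun j => (bucket t j).inf' (hne j) fun i => cl i + d i * δ' i),
      ← Finset.sum_add_distrib]
    exact Finset.sum_le_sum (fun j _ => hpickle j.1 j.2)
  have step2 : ∑ j ∈ J.attach, d (pick j.1 j.2) * (δ (pick j.1 j.2) - δ' (pick j.1 j.2))
      ≤ D * ((∑ i, δ i) - (∑ i, δ' i)) := by
    have hinj : Set.InjOn (fun j : {x // x ∈ J} => pick j.1 j.2) J.attach := by
      intro a _ b _ hab
      have ha := (mem_bucket t).mp (hpick a.1 a.2)
      have hb := (mem_bucket t).mp (hpick b.1 b.2)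
      simp only at hab
      have : a.1 = b.1 := by rw [← ha, ← hb, hab]
      exact Subtype.ext this
    calc ∑ j ∈ J.attach, d (pick j.1 j.2) * (δ (pick j.1 j.2) - δ' (pick j.1 j.2))
        = ∑ i ∈ J.attach.image (fun j : {x // x ∈ J} => pick j.1 j.2), d i * (δ i - δ' i) := by
          rw [Finset.sum_image hinj]
    _ ≤ ∑ i, d i * (δ i - δ' i) := by
          apply Finset.sum_le_sum_of_subset_of_nonneg (Finset.subset_univ _)
          intro i _ _
          exact mul_nonneg (hd i) (by linarith [hle i])
    _ ≤ ∑ i, D * (δ i - δ' i) := by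
          apply Finset.sum_le_sum
          intro i _
          exact mul_le_mul_of_nonneg_right (hDd i) (by linarith [hle i])
    _ = D * ((∑ i, δ i) - (∑ i, δ' i)) := by
          rw [← Finset.mul_sum, Finset.sum_sub_distrib]
  linarith

lemma Fv_lipschitz (hcl : ∀ i, 0 ≤ cl i) (hd : ∀ i, 0 ≤ d i) (J : Finset (Fin m))
    {a b : ℝ} (ha : 0 ≤ a) (hab : a ≤ b) :
    Fv t cl d hne J b ≤ Fv t cl d hne J a + (∑ i, d i) * (b - a) := by
  apply csSup_le (FSet_nonempty t cl d hne J (le_trans ha hab))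
  rintro g ⟨δ, hδ, hsum, rfl⟩
  rcases le_or_gt (∑ i, δ i) a with hcase | hcase
  · have : GG t cl d hne J δ ≤ Fv t cl d hne J a :=
      le_csSup (FSet_bddAbove t cl d hne hcl hd J a) ⟨δ, hδ, hcase, rfl⟩
    have hD : 0 ≤ (∑ i, d i) * (b - a) :=
      mul_nonneg (Finset.sum_nonneg fun i _ => hd i) (by linarith)
    linarith
  · have hSpos : 0 < ∑ i, δ i := lt_of_le_of_lt ha hcase
    set s : ℝ := a / (∑ i, δ i) with hs
    have hs0 : 0 ≤ s := div_nonneg ha hSpos.le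
    have hs1 : s ≤ 1 := by
      rw [hs, div_le_one hSpos]
      exact hcase.le
    set δ' : Fin n → ℝ := fun i => s * δ i with hδ'
    have hδ'le : ∀ i, δ' i ≤ δ i := by
      intro i
      show s * δ i ≤ δ i
      exact mul_le_of_le_one_left (hδ i).1 hs1
    have hδ'01 : ∀ i, 0 ≤ δ' i ∧ δ' i ≤ 1 := by
      intro i
      exact ⟨mul_nonneg hs0 (hδ i).1, le_trans (hδ'le i) (hδ i).2⟩
    have hδ'sum : ∑ i, δ' i = a := by
      have h0 : ∑ i, δ' i = s * ∑ i, δ i := by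
        rw [Finset.mul_sum]
      rw [h0, hs]
      field_simp
    have h1 := GG_lipschitz t cl d hne hd J δ δ' hδ'le
    have h2 : GG t cl d hne J δ' ≤ Fv t cl d hne J a :=
      le_csSup (FSet_bddAbove t cl d hne hcl hd J a) ⟨δ', hδ'01, le_of_eq hδ'sum, rfl⟩
    have h3 : (∑ i, d i) * ((∑ i, δ i) - (∑ i, δ' i)) ≤ (∑ i, d i) * (b - a) := by
      apply mul_le_mul_of_nonneg_left _ (Finset.sum_nonneg fun i _ => hd i)
      rw [hδ'sum]
      linarith
    linarith

lemma Fv_concave_comb (hcl : ∀ i, 0 ≤ cl i) (hd : ∀ i, 0 ≤ d i) (J : Finset (Fin m))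
    {a c lam mu : ℝ} (ha : 0 ≤ a) (hc : 0 ≤ c) (hlam : 0 ≤ lam) (hmu : 0 ≤ mu)
    (hsum : lam + mu = 1) :
    lam * Fv t cl d hne J a + mu * Fv t cl d hne J c ≤ Fv t cl d hne J (lam * a + mu * c) := by
  by_contra hcon
  push_neg at hcon
  set ε : ℝ := (lam * Fv t cl d hne J a + mu * Fv t cl d hne J c
    - Fv t cl d hne J (lam * a + mu * c)) / 2 with hε
  have hεpos : 0 < ε := by rw [hε]; linarith
  -- pick near-optimal elements
  obtain ⟨u, hu, huv⟩ := exists_lt_of_lt_csSup (FSet_nonempty t cl d hne J ha)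
    (show Fv t cl d hne J a - ε < Fv t cl d hne J a by linarith)
  obtain ⟨v, hv, hvv⟩ := exists_lt_of_lt_csSup (FSet_nonempty t cl d hne J hc)
    (show Fv t cl d hne J c - ε < Fv t cl d hne J c by linarith)
  obtain ⟨δa, hδa, hδasum, rfl⟩ := hu
  obtain ⟨δc, hδc, hδcsum, rfl⟩ := hv
  set δb : Fin n → ℝ := fun i => lam * δa i + mu * δc i with hδb
  have hδb01 : ∀ i, 0 ≤ δb i ∧ δb i ≤ 1 := by
    intro i
    constructor
    · exact add_nonneg (mul_nonneg hlam (hδa i).1) (mul_nonneg hmu (hδc i).1)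
    · calc lam * δa i + mu * δc i ≤ lam * 1 + mu * 1 := by
            gcongr
            exact (hδa i).2
            exact (hδc i).2
      _ = 1 := by linarith
  have hδbsum : ∑ i, δb i ≤ lam * a + mu * c := by
    simp only [hδb, Finset.sum_add_distrib, ← Finset.mul_sum]
    gcongr
  have hconc : lam * GG t cl d hne J δa + mu * GG t cl d hne J δc ≤ GG t cl d hne J δb := by
    unfold GG
    rw [Finset.mul_sum, Finset.mul_sum, ← Finset.sum_add_distrib]
    apply Finset.sum_le_sum
    intro j _
    apply Finset.le_inf'
    intro i hi
    have h1 : ((bucket t j).inf' (hne j) fun k => cl k + d k * δa k) ≤ cl i + d i * δa i :=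
      Finset.inf'_le _ hi
    have h2 : ((bucket t j).inf' (hne j) fun k => cl k + d k * δc k) ≤ cl i + d i * δc i :=
      Finset.inf'_le _ hi
    have hδbi : δb i = lam * δa i + mu * δc i := rfl
    rw [hδbi]
    have hcli : lam * cl i + mu * cl i = cl i := by rw [← add_mul, hsum, one_mul]
    have f1 := mul_le_mul_of_nonneg_left h1 hlam
    have f2 := mul_le_mul_of_nonneg_left h2 hmu
    nlinarith [f1, f2, hcli]
  have hmem : GG t cl d hne J δb ≤ Fv t cl d hne J (lam * a + mu * c) :=
    le_csSup (FSet_bddAbove t cl d hne hcl hd J _) ⟨δb, hδb01, hδbsum, rfl⟩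
  have hmul : lam * ε + mu * ε = ε := by rw [← add_mul, hsum, one_mul]
  have e1 := mul_le_mul_of_nonneg_left huv.le hlam
  have e2 := mul_le_mul_of_nonneg_left hvv.le hmu
  have e3 : lam * (Fv t cl d hne J a - ε) = lam * Fv t cl d hne J a - lam * ε := by ring
  have e4 : mu * (Fv t cl d hne J c - ε) = mu * Fv t cl d hne J c - mu * ε := by ring
  rw [e3] at e1
  rw [e4] at e2
  linarith

lemma exists_supergrad (hcl : ∀ i, 0 ≤ cl i) (hd : ∀ i, 0 ≤ d i) (J : Finset (Fin m))
    {Γ : ℝ} (hΓ : 0 ≤ Γ) :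
    ∃ π : ℝ, 0 ≤ π ∧ ∀ b : ℝ, 0 ≤ b →
      Fv t cl d hne J b ≤ Fv t cl d hne J Γ + π * (b - Γ) := by
  set D := ∑ i, d i with hD
  have hD0 : 0 ≤ D := Finset.sum_nonneg fun i _ => hd i
  set Q : Set ℝ := {q | ∃ b : ℝ, Γ < b ∧ q = (Fv t cl d hne J b - Fv t cl d hne J Γ) / (b - Γ)}
    with hQ
  have hQne : Q.Nonempty := ⟨_, Γ + 1, by linarith, rfl⟩
  have hQbdd : BddAbove Q := by
    refine ⟨D, ?_⟩
    rintro q ⟨b, hb, rfl⟩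
    rw [div_le_iff₀ (by linarith)]
    have := Fv_lipschitz t cl d hne hcl hd J hΓ hb.le
    rw [← hD] at this
    linarith
  set π : ℝ := sSup Q with hπ
  have hπ0 : 0 ≤ π := by
    have h1 : (Fv t cl d hne J (Γ+1) - Fv t cl d hne J Γ) / (Γ + 1 - Γ) ∈ Q :=
      ⟨Γ + 1, by linarith, rfl⟩
    have h2 := le_csSup hQbdd h1
    have h3 : 0 ≤ (Fv t cl d hne J (Γ+1) - Fv t cl d hne J Γ) / (Γ + 1 - Γ) := by
      apply div_nonneg _ (by linarith)
      linarith [Fv_mono t cl d hne hcl hd J hΓ (show Γ ≤ Γ + 1 by linarith)]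
    linarith
  refine ⟨π, hπ0, ?_⟩
  intro b hb
  rcases lt_trichotomy b Γ with hlt | heq | hgt
  · -- b < Γ : need π ≤ (Fv Γ - Fv b)/(Γ - b)
    have hkey : π ≤ (Fv t cl d hne J Γ - Fv t cl d hne J b) / (Γ - b) := by
      apply csSup_le hQne
      rintro q ⟨cc, hcc, rfl⟩
      rw [div_le_div_iff₀ (by linarith) (by linarith)]
      -- concavity at Γ between b and cc
      set lam : ℝ := (cc - Γ) / (cc - b) with hlam
      set mu : ℝ := (Γ - b) / (cc - b) with hmu
      have hcb : 0 < cc - b := by linarith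
      have h1 : 0 ≤ lam := div_nonneg (by linarith) hcb.le
      have h2 : 0 ≤ mu := div_nonneg (by linarith) hcb.le
      have h3 : lam + mu = 1 := by
        rw [hlam, hmu]
        field_simp
        ring
      have h4 : lam * b + mu * cc = Γ := by
        rw [hlam, hmu]
        field_simp
        ring
      have := Fv_concave_comb t cl d hne hcl hd J hb (by linarith : (0:ℝ) ≤ cc) h1 h2 h3
      rw [h4] at this
      have hlam' : lam = (cc - Γ) / (cc - b) := rfl
      -- from lam * Fv b + mu * Fv cc ≤ Fv Γ derive the slope inequality
      have hexp : (cc - Γ) * Fv t cl d hne J b + (Γ - b) * Fv t cl d hne J cc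
          ≤ (cc - b) * Fv t cl d hne J Γ := by
        have := mul_le_mul_of_nonneg_left this hcb.le
        calc (cc - Γ) * Fv t cl d hne J b + (Γ - b) * Fv t cl d hne J cc
            = (cc - b) * (lam * Fv t cl d hne J b + mu * Fv t cl d hne J cc) := by
              rw [hlam, hmu]
              field_simp
              try ring
        _ ≤ (cc - b) * Fv t cl d hne J Γ := this
      nlinarith
    have h2 : 0 < Γ - b := by linarith
    rw [le_div_iff₀ h2] at hkey
    nlinarith
  · rw [heq]; simp
  · have h1 : (Fv t cl d hne J b - Fv t cl d hne J Γ) / (b - Γ) ≤ π :=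
      le_csSup hQbdd ⟨b, hgt, rfl⟩
    rw [div_le_iff₀ (by linarith)] at h1
    linarith

end FV

section FV2
variable {n m : ℕ} (t : Fin n → Fin m) (cl d : Fin n → ℝ)
  (hne : ∀ j : Fin m, (bucket t j).Nonempty)








/-- the feasible set of the `f_j(π)` LP. -/
def fjSet {n m : ℕ} (t : Fin n → Fin m) (cl d : Fin n → ℝ) (j : Fin m) (π : ℝ) : Set ℝ :=
  {v | ∃ y ρ : Fin n → ℝ,
    (∀ i, t i = j → (0 ≤ y i ∧ y i ≤ 1 ∧ 0 ≤ ρ i ∧ d i * y i ≤ π + ρ i)) ∧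
    (∑ i ∈ bucket t j, y i = 1) ∧
    v = ∑ i ∈ bucket t j, (cl i * y i + ρ i)}

lemma fj_eq (j : Fin m) (π : ℝ) : fj t cl d j π = sInf (fjSet t cl d j π) := rfl

lemma fjSet_nonneg (hcl : ∀ i, 0 ≤ cl i) (j : Fin m) (π : ℝ) :
    ∀ v ∈ fjSet t cl d j π, 0 ≤ v := by
  rintro v ⟨y, ρ, hfeas, hysum, rfl⟩
  apply Finset.sum_nonneg
  intro i hi
  obtain ⟨hy0, _, hρ0, _⟩ := hfeas i ((mem_bucket t).mp hi)
  have := mul_nonneg (hcl i) hy0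
  linarith

lemma fjSet_bddBelow (hcl : ∀ i, 0 ≤ cl i) (j : Fin m) (π : ℝ) :
    BddBelow (fjSet t cl d j π) :=
  ⟨0, fun v hv => fjSet_nonneg t cl d hcl j π v hv⟩

include hne in
lemma fjSet_nonempty (hd : ∀ i, 0 ≤ d i) (j : Fin m) {π : ℝ} (hπ : 0 ≤ π) :
    (fjSet t cl d j π).Nonempty := by
  set i₀ : Fin n := (hne j).choose with hi₀
  have hi₀mem : i₀ ∈ bucket t j := (hne j).choose_spec
  refine ⟨_, (fun i => if i = i₀ then 1 else 0), d, ?_, ?_, rfl⟩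
  · intro i _
    refine ⟨?_, ?_, hd i, ?_⟩
    · dsimp only
      split_ifs <;> norm_num
    · dsimp only
      split_ifs <;> norm_num
    · dsimp only
      split_ifs with h
      · rw [mul_one]; linarith
      · rw [mul_zero]; linarith [hd i]
  · rw [Finset.sum_ite_eq' (bucket t j) i₀ (fun _ => (1:ℝ))]
    rw [if_pos hi₀mem]

include hne in
lemma fj_nonneg (hcl : ∀ i, 0 ≤ cl i) (hd : ∀ i, 0 ≤ d i) (j : Fin m) {π : ℝ} (hπ : 0 ≤ π) :
    0 ≤ fj t cl d j π :=
  le_csInf (fjSet_nonempty t cl d hne hd j hπ) (fjSet_nonneg t cl d hcl j π)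

lemma fj_le_val (hcl : ∀ i, 0 ≤ cl i) (j : Fin m) (π : ℝ) {v : ℝ}
    (hv : v ∈ fjSet t cl d j π) : fj t cl d j π ≤ v :=
  csInf_le (fjSet_bddBelow t cl d hcl j π) hv

/-- weak duality for a single bucket. -/
lemma fj_weak (hcl : ∀ i, 0 ≤ cl i) (hd : ∀ i, 0 ≤ d i) (j : Fin m) {π : ℝ} (hπ : 0 ≤ π)
    (δ : Fin n → ℝ) (hδ : ∀ i, 0 ≤ δ i ∧ δ i ≤ 1) :
    ((bucket t j).inf' (hne j) fun i => cl i + d i * δ i)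
      ≤ fj t cl d j π + π * ∑ i ∈ bucket t j, δ i := by
  have key : ((bucket t j).inf' (hne j) fun i => cl i + d i * δ i)
      - π * ∑ i ∈ bucket t j, δ i ≤ fj t cl d j π := by
    apply le_csInf (fjSet_nonempty t cl d hne hd j hπ)
    rintro v ⟨y, ρ, hfeas, hysum, rfl⟩
    set I := (bucket t j).inf' (hne j) fun i => cl i + d i * δ i with hI
    have step1 : I ≤ ∑ i ∈ bucket t j, (cl i + d i * δ i) * y i := by
      calc I = I * ∑ i ∈ bucket t j, y i := by rw [hysum, mul_one]
      _ = ∑ i ∈ bucket t j, I * y i := by rw [Finset.mul_sum]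
      _ ≤ ∑ i ∈ bucket t j, (cl i + d i * δ i) * y i := by
          apply Finset.sum_le_sum
          intro i hi
          have h1 : I ≤ cl i + d i * δ i := Finset.inf'_le _ hi
          have h2 : 0 ≤ y i := (hfeas i ((mem_bucket t).mp hi)).1
          exact mul_le_mul_of_nonneg_right h1 h2
    have step2 : ∑ i ∈ bucket t j, (cl i + d i * δ i) * y i
        ≤ ∑ i ∈ bucket t j, (cl i * y i + ρ i) + π * ∑ i ∈ bucket t j, δ i := by
      rw [Finset.mul_sum, ← Finset.sum_add_distrib]
      apply Finset.sum_le_sum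
      intro i hi
      obtain ⟨hy0, hy1, hρ0, hdy⟩ := hfeas i ((mem_bucket t).mp hi)
      obtain ⟨hδ0, hδ1⟩ := hδ i
      have h1 : d i * δ i * y i ≤ δ i * (π + ρ i) := by
        have : d i * y i * δ i ≤ (π + ρ i) * δ i := mul_le_mul_of_nonneg_right hdy hδ0
        nlinarith
      have h2 : δ i * (π + ρ i) ≤ π * δ i + ρ i := by nlinarith
      nlinarith
    linarith
  linarith

/-- per-bucket strong duality via `bucket_duality`. -/
lemma fj_strong (hcl : ∀ i, 0 ≤ cl i) (hd : ∀ i, 0 ≤ d i) (j : Fin m) {π : ℝ} (hπ : 0 ≤ π) :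
    ∃ δ : Fin n → ℝ, (∀ i, 0 ≤ δ i ∧ δ i ≤ 1) ∧ (∀ i, i ∉ bucket t j → δ i = 0) ∧
      fj t cl d j π ≤
        ((bucket t j).inf' (hne j) fun i => cl i + d i * δ i)
          - π * ∑ i ∈ bucket t j, δ i := by
  obtain ⟨δ, y, ρ, hδ01, hδ0, hfeas, hysum, hval⟩ :=
    bucket_duality (bucket t j) (hne j) cl d hcl hd π hπ
  refine ⟨δ, hδ01, hδ0, ?_⟩
  refine le_trans (fj_le_val t cl d hcl j π ?_) hval
  exact ⟨y, ρ, fun i hi => hfeas i ((mem_bucket t).mpr hi), hysum, rfl⟩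

/-- combined strong duality over a set of buckets. -/
lemma sum_fj_le (hcl : ∀ i, 0 ≤ cl i) (hd : ∀ i, 0 ≤ d i) (J : Finset (Fin m))
    {π : ℝ} (hπ : 0 ≤ π) :
    ∃ δ : Fin n → ℝ, (∀ i, 0 ≤ δ i ∧ δ i ≤ 1) ∧
      (∑ j ∈ J, fj t cl d j π) ≤ GG t cl d hne J δ - π * ∑ i, δ i := by
  choose δf h1 h2 h3 using fun j : Fin m => fj_strong t cl d hne hcl hd j hπ
  set δ : Fin n → ℝ := fun i => if t i ∈ J then δf (t i) i else 0 with hδ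
  have hδ01 : ∀ i, 0 ≤ δ i ∧ δ i ≤ 1 := by
    intro i
    simp only [hδ]
    split_ifs with h
    · exact h1 (t i) i
    · exact ⟨le_refl 0, zero_le_one⟩
  have hagree : ∀ j ∈ J, ∀ i ∈ bucket t j, δ i = δf j i := by
    intro j hj i hi
    have hti : t i = j := (mem_bucket t).mp hi
    simp only [hδ, hti, if_pos hj]
  have hGG : GG t cl d hne J δ = ∑ j ∈ J, (bucket t j).inf' (hne j)
      (fun i => cl i + d i * δf j i) := by
    unfold GG
    apply Finset.sum_congr rfl
    intro j hj
    apply Finset.inf'_congr _ rfl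
    intro i hi
    rw [hagree j hj i hi]
  have hsumδ : ∑ i, δ i = ∑ j ∈ J, ∑ i ∈ bucket t j, δf j i := by
    have hfib : ∑ j : Fin m, ∑ i ∈ Finset.univ.filter (fun i => t i = j), δ i = ∑ i, δ i :=
      Finset.sum_fiberwise_of_maps_to (fun i _ => Finset.mem_univ (t i)) δ
    have hfib' : ∑ i, δ i = ∑ j : Fin m, ∑ i ∈ bucket t j, δ i := by
      rw [← hfib]; rfl
    rw [hfib']
    rw [← Finset.sum_filter_add_sum_filter_not Finset.univ (· ∈ J)
      (fun j => ∑ i ∈ bucket t j, δ i)]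
    have hz : ∑ j ∈ Finset.univ.filter (· ∉ J), ∑ i ∈ bucket t j, δ i = 0 := by
      apply Finset.sum_eq_zero
      intro j hj
      apply Finset.sum_eq_zero
      intro i hi
      have hti : t i = j := (mem_bucket t).mp hi
      have : t i ∉ J := by rw [hti]; exact (Finset.mem_filter.mp hj).2
      simp only [hδ, if_neg this]
    rw [hz, add_zero]
    have : Finset.univ.filter (· ∈ J) = J := by
      ext j; simp
    rw [this]
    apply Finset.sum_congr rfl
    intro j hj
    apply Finset.sum_congr rfl
    intro i hi
    exact hagree j hj i hi
  refine ⟨δ, hδ01, ?_⟩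
  rw [hGG, hsumδ, Finset.mul_sum, ← Finset.sum_sub_distrib]
  apply Finset.sum_le_sum
  intro j hj
  exact h3 j

/-- global strong duality. -/
lemma strong_duality (hcl : ∀ i, 0 ≤ cl i) (hd : ∀ i, 0 ≤ d i) (J : Finset (Fin m))
    {Γ : ℝ} (hΓ : 0 ≤ Γ) :
    ∃ π : ℝ, 0 ≤ π ∧ Γ * π + ∑ j ∈ J, fj t cl d j π ≤ Fv t cl d hne J Γ := by
  obtain ⟨π, hπ0, hsg⟩ := exists_supergrad t cl d hne hcl hd J hΓ
  obtain ⟨δ, hδ01, hle⟩ := sum_fj_le t cl d hne hcl hd J hπ0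
  have hb0 : 0 ≤ ∑ i, δ i := Finset.sum_nonneg fun i _ => (hδ01 i).1
  have hmem : GG t cl d hne J δ ≤ Fv t cl d hne J (∑ i, δ i) :=
    le_csSup (FSet_bddAbove t cl d hne hcl hd J _) ⟨δ, hδ01, le_refl _, rfl⟩
  have hsg' := hsg (∑ i, δ i) hb0
  refine ⟨π, hπ0, ?_⟩
  nlinarith
end FV2

section MAIN
variable {n m : ℕ} (t : Fin n → Fin m) (cl d : Fin n → ℝ)
  (hne : ∀ j : Fin m, (bucket t j).Nonempty)









-- ########## helpers ##########

lemma binary_nonneg {x : Fin n → ℝ} (hx : IsBinary x) : ∀ i, 0 ≤ x i := by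
  intro i
  rcases hx i with h | h <;> rw [h] <;> norm_num

lemma binary_le_one {x : Fin n → ℝ} (hx : IsBinary x) : ∀ i, x i ≤ 1 := by
  intro i
  rcases hx i with h | h <;> rw [h] <;> norm_num

def ind (p : Prop) : ℝ := if p then 1 else 0

lemma ind_pos {p : Prop} (h : p) : ind p = 1 := by simp [ind, h]
lemma ind_neg {p : Prop} (h : ¬ p) : ind p = 0 := by simp [ind, h]
lemma ind_nonneg (p : Prop) : 0 ≤ ind p := by by_cases h : p <;> simp [ind, h]
lemma ind_le_one (p : Prop) : ind p ≤ 1 := by by_cases h : p <;> simp [ind, h]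
lemma ind_binary (p : Prop) : ind p = 0 ∨ ind p = 1 := by
  by_cases h : p
  · right; exact ind_pos h
  · left; exact ind_neg h
lemma ind_congr {p q : Prop} (h : p ↔ q) : ind p = ind q := by
  by_cases hp : p
  · rw [ind_pos hp, ind_pos (h.mp hp)]
  · rw [ind_neg hp, ind_neg (fun hq => hp (h.mpr hq))]

lemma sum_buckets (f : Fin n → ℝ) : ∑ j : Fin m, ∑ i ∈ bucket t j, f i = ∑ i, f i := by
  have h := Finset.sum_fiberwise_of_maps_to
    (fun (i : Fin n) (_ : i ∈ Finset.univ) => Finset.mem_univ (t i)) f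
  exact h

lemma sum_buckets_le (f : Fin n → ℝ) (hf : ∀ i, 0 ≤ f i) (Jset : Finset (Fin m)) :
    ∑ j ∈ Jset, ∑ i ∈ bucket t j, f i ≤ ∑ i, f i := by
  rw [← sum_buckets t f]
  apply Finset.sum_le_sum_of_subset_of_nonneg (Finset.subset_univ _)
  intro j _ _
  exact Finset.sum_nonneg fun i _ => hf i

lemma sum_bucket_ind (P : Fin m → Prop) (a : Fin m → Fin n)
    (ha : ∀ j, a j ∈ bucket t j) (g : Fin n → ℝ) (j : Fin m) :
    ∑ i ∈ bucket t j, ind (P (t i) ∧ i = a (t i)) * g i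
      = ind (P j) * g (a j) := by
  have key : ∀ i ∈ bucket t j, ind (P (t i) ∧ i = a (t i)) * g i
      = if i = a j then ind (P j) * g i else 0 := by
    intro i hi
    have hti : t i = j := (mem_bucket t).mp hi
    by_cases h2 : i = a j
    · rw [if_pos h2]
      congr 1
      apply ind_congr
      rw [hti, h2]
      simp
    · rw [if_neg h2]
      have : ¬ (P (t i) ∧ i = a (t i)) := by
        rw [hti]
        rintro ⟨_, h⟩
        exact h2 h
      rw [ind_neg this, zero_mul]
  rw [Finset.sum_congr rfl key, Finset.sum_ite_eq' (bucket t j) (a j)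
    (fun i => ind (P j) * g i), if_pos (ha j)]

lemma sum_ind (P : Fin m → Prop) (a : Fin m → Fin n)
    (ha : ∀ j, a j ∈ bucket t j) (g : Fin n → ℝ) :
    ∑ i, ind (P (t i) ∧ i = a (t i)) * g i
      = ∑ j ∈ Finset.univ.filter P, g (a j) := by
  rw [← sum_buckets t (fun i => ind (P (t i) ∧ i = a (t i)) * g i)]
  rw [Finset.sum_congr rfl (fun j (_ : j ∈ Finset.univ) => sum_bucket_ind t P a ha g j)]
  rw [Finset.sum_filter]
  apply Finset.sum_congr rfl
  intro j _
  by_cases h : P j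
  · rw [ind_pos h, one_mul, if_pos h]
  · rw [ind_neg h, zero_mul, if_neg h]

lemma sum_x_bucket {x : Fin n → ℝ} (hx : FeasX t x) (j : Fin m) :
    ∑ i ∈ bucket t j, x i = ind (∃ k ∈ bucket t j, x k = 1) := by
  by_cases h : ∃ k ∈ bucket t j, x k = 1
  · rw [ind_pos h]
    obtain ⟨k, hk, hk1⟩ := h
    have h1 : (1:ℝ) ≤ ∑ i ∈ bucket t j, x i := by
      calc (1:ℝ) = x k := hk1.symm
      _ ≤ ∑ i ∈ bucket t j, x i :=
          Finset.single_le_sum (fun i _ => binary_nonneg hx.1 i) hk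
    exact le_antisymm (hx.2 j) h1
  · rw [ind_neg h]
    apply Finset.sum_eq_zero
    intro i hi
    rcases hx.1 i with h0 | h1
    · exact h0
    · exact absurd ⟨i, hi, h1⟩ h

/-- the canonical second-stage solution. -/
lemma feasY_exists {x : Fin n → ℝ} (hx : FeasX t x) (a : Fin m → Fin n)
    (ha : ∀ j, a j ∈ bucket t j) :
    FeasY t x (fun i => ind ((¬ ∃ k ∈ bucket t (t i), x k = 1) ∧ i = a (t i))) := by
  refine ⟨?_, ?_, ?_⟩
  · intro i
    exact ind_binary _
  · intro j
    have h2 : ∑ i ∈ bucket t j,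
        ind ((¬ ∃ k ∈ bucket t (t i), x k = 1) ∧ i = a (t i)) * (fun _ => (1:ℝ)) i
        = ind (¬ ∃ k ∈ bucket t j, x k = 1) * 1 :=
      sum_bucket_ind t (fun j => ¬ ∃ k ∈ bucket t j, x k = 1) a ha (fun _ => 1) j
    simp only [mul_one] at h2
    show ∑ i ∈ bucket t j, (x i + ind ((¬ ∃ k ∈ bucket t (t i), x k = 1) ∧ i = a (t i))) = 1
    rw [Finset.sum_add_distrib, h2, sum_x_bucket t hx j]
    by_cases h : ∃ k ∈ bucket t j, x k = 1
    · rw [ind_pos h, ind_neg (by simpa using h)]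
      norm_num
    · rw [ind_neg h, ind_pos (by simpa using h)]
      norm_num
  · intro i
    show x i + ind _ ≤ 1
    by_cases h : (¬ ∃ k ∈ bucket t (t i), x k = 1) ∧ i = a (t i)
    · have hxi : x i = 0 := by
        rcases hx.1 i with h0 | h1
        · exact h0
        · exact absurd ⟨i, (mem_bucket t).mpr rfl, h1⟩ h.1
      rw [hxi, ind_pos h]
      norm_num
    · rw [ind_neg h]
      have := binary_le_one hx.1 i
      linarith

lemma UC_mem_cl {Γ : ℝ} (hΓ : 0 ≤ Γ) : cl ∈ UC cl d Γ := by
  refine ⟨fun _ => 0, fun i => ⟨le_refl _, zero_le_one⟩, fun i => by ring, by simpa using hΓ⟩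

lemma UC_nonneg {Γ : ℝ} {c : Fin n → ℝ} (hcl : ∀ i, 0 ≤ cl i) (hd : ∀ i, 0 ≤ d i)
    (hc : c ∈ UC cl d Γ) : ∀ i, 0 ≤ c i := by
  obtain ⟨δ, hδ, hcδ, _⟩ := hc
  intro i
  rw [hcδ i]
  have := mul_nonneg (hd i) (hδ i).1
  linarith [hcl i]

lemma UC_le {Γ : ℝ} {c : Fin n → ℝ} (hd : ∀ i, 0 ≤ d i)
    (hc : c ∈ UC cl d Γ) : ∀ i, c i ≤ cl i + d i := by
  obtain ⟨δ, hδ, hcδ, _⟩ := hc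
  intro i
  rw [hcδ i]
  nlinarith [(hδ i).2, hd i]

-- ########## Z and W sets ##########

def Zset (x c : Fin n → ℝ) : Set ℝ :=
  {z | ∃ y, FeasY t x y ∧ z = ∑ i, c i * y i}

def Wset (Γ : ℝ) (x : Fin n → ℝ) : Set ℝ :=
  {w | ∃ c ∈ UC cl d Γ, w = sInf (Zset t x c)}

include hne in
lemma Z_nonempty {x : Fin n → ℝ} (hx : FeasX t x) (c : Fin n → ℝ) :
    (Zset t x c).Nonempty :=
  ⟨_, _, feasY_exists t hx (fun j => (hne j).choose) (fun j => (hne j).choose_spec), rfl⟩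

lemma Z_nonneg {x c : Fin n → ℝ} (hc : ∀ i, 0 ≤ c i) :
    ∀ z ∈ Zset t x c, 0 ≤ z := by
  rintro z ⟨y, hy, rfl⟩
  exact Finset.sum_nonneg fun i _ => mul_nonneg (hc i) (binary_nonneg hy.1 i)

lemma Z_bddBelow {x c : Fin n → ℝ} (hc : ∀ i, 0 ≤ c i) : BddBelow (Zset t x c) :=
  ⟨0, fun z hz => Z_nonneg t hc z hz⟩

include hne in
lemma W_le_M {Γ : ℝ} {x : Fin n → ℝ} (hcl : ∀ i, 0 ≤ cl i) (hd : ∀ i, 0 ≤ d i)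
    (hx : FeasX t x) :
    ∀ w ∈ Wset t cl d Γ x, w ≤ ∑ i, (cl i + d i) := by
  rintro w ⟨c, hcU, rfl⟩
  have hc0 : ∀ i, 0 ≤ c i := UC_nonneg cl d hcl hd hcU
  obtain ⟨y₀, hy₀, hz₀⟩ : ∃ z ∈ Zset t x c, z ≤ ∑ i, (cl i + d i) := by
    obtain ⟨z, hz⟩ := Z_nonempty t hne hx c
    obtain ⟨y, hy, rfl⟩ := hz
    refine ⟨_, ⟨y, hy, rfl⟩, ?_⟩
    apply Finset.sum_le_sum
    intro i _
    have h1 : c i * y i ≤ c i := by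
      nlinarith [binary_le_one hy.1 i, binary_nonneg hy.1 i, hc0 i]
    linarith [UC_le cl d hd hcU i]
  exact le_trans (csInf_le (Z_bddBelow t hc0) hy₀) hz₀

include hne in
lemma W_bddAbove {Γ : ℝ} {x : Fin n → ℝ} (hcl : ∀ i, 0 ≤ cl i) (hd : ∀ i, 0 ≤ d i)
    (hx : FeasX t x) : BddAbove (Wset t cl d Γ x) :=
  ⟨∑ i, (cl i + d i), fun w hw => W_le_M t cl d hne hcl hd hx w hw⟩

lemma W_nonempty {Γ : ℝ} (hΓ : 0 ≤ Γ) (x : Fin n → ℝ) :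
    (Wset t cl d Γ x).Nonempty :=
  ⟨_, cl, UC_mem_cl cl d hΓ, rfl⟩

include hne in
lemma sSupW_nonneg {Γ : ℝ} {x : Fin n → ℝ} (hcl : ∀ i, 0 ≤ cl i) (hd : ∀ i, 0 ≤ d i)
    (hΓ : 0 ≤ Γ) (hx : FeasX t x) : 0 ≤ sSup (Wset t cl d Γ x) := by
  have hmem : sInf (Zset t x cl) ∈ Wset t cl d Γ x := ⟨cl, UC_mem_cl cl d hΓ, rfl⟩
  have h0 : 0 ≤ sInf (Zset t x cl) :=
    le_csInf (Z_nonempty t hne hx cl) (Z_nonneg t hcl)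
  exact le_trans h0 (le_csSup (W_bddAbove t cl d hne hcl hd hx) hmem)

lemma inner_lb {x y c : Fin n → ℝ} (hc : ∀ i, 0 ≤ c i) (hy : FeasY t x y)
    (Jset : Finset (Fin m)) (hz : ∀ j ∈ Jset, ∀ i ∈ bucket t j, x i = 0) :
    ∑ j ∈ Jset, ((bucket t j).inf' (hne j) c) ≤ ∑ i, c i * y i := by
  have hy0 : ∀ i, 0 ≤ y i := binary_nonneg hy.1
  have step1 : ∀ j ∈ Jset, ((bucket t j).inf' (hne j) c) ≤ ∑ i ∈ bucket t j, c i * y i := by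
    intro j hj
    have hsy : ∑ i ∈ bucket t j, y i = 1 := by
      have h1 := hy.2.1 j
      rw [Finset.sum_add_distrib] at h1
      have h2 : ∑ i ∈ bucket t j, x i = 0 := Finset.sum_eq_zero (hz j hj)
      linarith
    calc ((bucket t j).inf' (hne j) c)
        = ((bucket t j).inf' (hne j) c) * ∑ i ∈ bucket t j, y i := by rw [hsy, mul_one]
    _ = ∑ i ∈ bucket t j, ((bucket t j).inf' (hne j) c) * y i := by rw [Finset.mul_sum]
    _ ≤ ∑ i ∈ bucket t j, c i * y i := by
        apply Finset.sum_le_sum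
        intro i hi
        exact mul_le_mul_of_nonneg_right (Finset.inf'_le _ hi) (hy0 i)
  calc ∑ j ∈ Jset, ((bucket t j).inf' (hne j) c)
      ≤ ∑ j ∈ Jset, ∑ i ∈ bucket t j, c i * y i := Finset.sum_le_sum step1
  _ ≤ ∑ i, c i * y i := sum_buckets_le t _ (fun i => mul_nonneg (hc i) (hy0 i)) Jset

-- ########## minC ##########

lemma minC_mem (C : Fin n → ℝ) (ht : ∀ j, ∃ i, t i = j) (j : Fin m) :
    ∃ k, t k = j ∧ C k = sInf {w | ∃ k, t k = j ∧ w = C k} := by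
  set S : Set ℝ := {w | ∃ k, t k = j ∧ w = C k} with hS
  have hSne : S.Nonempty := by
    obtain ⟨k, hk⟩ := ht j
    exact ⟨C k, k, hk, rfl⟩
  have hSfin : S.Finite := by
    apply Set.Finite.subset (Set.finite_range C)
    rintro w ⟨k, _, rfl⟩
    exact ⟨k, rfl⟩
  have := hSne.csInf_mem hSfin
  obtain ⟨k, hk, hkeq⟩ := this
  exact ⟨k, hk, hkeq.symm⟩

lemma minC_le (C : Fin n → ℝ) (j : Fin m) {k : Fin n} (hk : t k = j) :
    sInf {w | ∃ k, t k = j ∧ w = C k} ≤ C k := by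
  have hSfin : Set.Finite {w | ∃ k, t k = j ∧ w = C k} := by
    apply Set.Finite.subset (Set.finite_range C)
    rintro w ⟨k, _, rfl⟩
    exact ⟨k, rfl⟩
  exact csInf_le hSfin.bddBelow ⟨k, hk, rfl⟩

lemma minC_nonneg (C : Fin n → ℝ) (hC : ∀ i, 0 ≤ C i) (ht : ∀ j, ∃ i, t i = j) (j : Fin m) :
    0 ≤ sInf {w | ∃ k, t k = j ∧ w = C k} := by
  obtain ⟨k, _, hkeq⟩ := minC_mem t C ht j
  rw [← hkeq]
  exact hC k

end MAIN

-- ########## main theorem ##########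

/-- The optimal value of (2RS-C) equals
`inf_{π ≥ 0} (Γπ + ∑_j min { min_{k∈T_j} C_k, f_j(π) })`. -/
theorem stmt6 (n m : ℕ) (hn : 1 ≤ n) (hm : 1 ≤ m)
    (t : Fin n → Fin m) (ht : ∀ j, ∃ i, t i = j)
    (C cl d : Fin n → ℝ) (Γ : ℝ)
    (hC : ∀ i, 0 ≤ C i) (hcl : ∀ i, 0 ≤ cl i) (hd : ∀ i, 0 ≤ d i) (hΓ : 0 ≤ Γ) :
    sInf {val | ∃ x, FeasX t x ∧
      val = (∑ i, C i * x i) +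
        sSup {w | ∃ c ∈ UC cl d Γ,
          w = sInf {z | ∃ y, FeasY t x y ∧ z = ∑ i, c i * y i}}}
    = sInf {val | ∃ π : ℝ, 0 ≤ π ∧
        val = Γ * π + ∑ j, min (sInf {w | ∃ k, t k = j ∧ w = C k}) (fj t cl d j π)} := by
  have hne : ∀ j : Fin m, (bucket t j).Nonempty := by
    intro j
    obtain ⟨i, hi⟩ := ht j
    exact ⟨i, (mem_bucket t).mpr hi⟩
  set minC : Fin m → ℝ := fun j => sInf {w | ∃ k, t k = j ∧ w = C k} with hminC
  -- rewrite inner sets using Zset/Wset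
  have hWrw : ∀ x : Fin n → ℝ,
      {w | ∃ c ∈ UC cl d Γ, w = sInf {z | ∃ y, FeasY t x y ∧ z = ∑ i, c i * y i}}
        = Wset t cl d Γ x := by
    intro x
    rfl
  set L : Set ℝ := {val | ∃ x, FeasX t x ∧
      val = (∑ i, C i * x i) + sSup (Wset t cl d Γ x)} with hL
  set R : Set ℝ := {val | ∃ π : ℝ, 0 ≤ π ∧
      val = Γ * π + ∑ j, min (minC j) (fj t cl d j π)} with hR
  have hLrw : {val | ∃ x, FeasX t x ∧
      val = (∑ i, C i * x i) +
        sSup {w | ∃ c ∈ UC cl d Γ,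
          w = sInf {z | ∃ y, FeasY t x y ∧ z = ∑ i, c i * y i}}} = L := rfl
  rw [hLrw]
  show sInf L = sInf R
  -- basic facts
  have hx0 : FeasX t (fun _ => 0) := by
    constructor
    · intro i; left; rfl
    · intro j; rw [Finset.sum_const_zero]; norm_num
  have hLne : L.Nonempty := ⟨_, (fun _ => 0), hx0, rfl⟩
  have hRne : R.Nonempty := ⟨_, 0, le_refl 0, rfl⟩
  have hLlb : ∀ v ∈ L, 0 ≤ v := by
    rintro v ⟨x, hx, rfl⟩
    have h1 : 0 ≤ ∑ i, C i * x i :=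
      Finset.sum_nonneg fun i _ => mul_nonneg (hC i) (binary_nonneg hx.1 i)
    have h2 := sSupW_nonneg t cl d hne hcl hd hΓ hx
    linarith
  have hRlb : ∀ v ∈ R, 0 ≤ v := by
    rintro v ⟨π, hπ, rfl⟩
    have h1 : 0 ≤ ∑ j : Fin m, min (minC j) (fj t cl d j π) := by
      apply Finset.sum_nonneg
      intro j _
      apply le_min
      · exact minC_nonneg t C hC ht j
      · exact fj_nonneg t cl d hne hcl hd j hπ
    have h2 : 0 ≤ Γ * π := mul_nonneg hΓ hπ
    linarith
  apply le_antisymm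
  · -- sInf L ≤ sInf R
    apply le_csInf hRne
    rintro val ⟨π, hπ0, rfl⟩
    -- construct x
    choose kf hkf1 hkf2 using fun j : Fin m => minC_mem t C ht j
    set cov : Fin m → Prop := fun j => minC j ≤ fj t cl d j π with hcov
    set x : Fin n → ℝ := fun i => ind (cov (t i) ∧ i = kf (t i)) with hx
    have hkfb : ∀ j, kf j ∈ bucket t j := fun j => (mem_bucket t).mpr (hkf1 j)
    have hxbin : IsBinary x := fun i => ind_binary _
    have hsumx : ∀ j, ∑ i ∈ bucket t j, x i = ind (cov j) := by
      intro j
      have h0 : ∑ i ∈ bucket t j, ind (cov (t i) ∧ i = kf (t i)) * (fun _ => (1:ℝ)) i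
          = ind (cov j) * 1 := sum_bucket_ind t cov kf hkfb (fun _ => 1) j
      simp only [mul_one] at h0
      exact h0
    have hxfeas : FeasX t x := by
      refine ⟨hxbin, ?_⟩
      intro j
      rw [hsumx j]
      exact ind_le_one _
    have hLmem : (∑ i, C i * x i) + sSup (Wset t cl d Γ x) ∈ L := ⟨x, hxfeas, rfl⟩
    refine le_trans (csInf_le ⟨0, hLlb⟩ hLmem) ?_
    -- bound the value
    have hCx : ∑ i, C i * x i = ∑ j ∈ Finset.univ.filter cov, minC j := by
      have h1 : ∀ i, C i * x i = ind (cov (t i) ∧ i = kf (t i)) * C i := fun i => mul_comm _ _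
      rw [Finset.sum_congr rfl (fun i _ => h1 i), sum_ind t cov kf hkfb C]
      apply Finset.sum_congr rfl
      intro j _
      exact hkf2 j
    have hW : sSup (Wset t cl d Γ x) ≤
        Γ * π + ∑ j ∈ Finset.univ.filter (fun j => ¬ cov j), fj t cl d j π := by
      apply csSup_le (W_nonempty t cl d hΓ x)
      rintro w ⟨c, hcU, rfl⟩
      have hc0 : ∀ i, 0 ≤ c i := UC_nonneg cl d hcl hd hcU
      -- argmin of c in each bucket
      have hamin : ∀ j : Fin m, ∃ a ∈ bucket t j, (bucket t j).inf' (hne j) c = c a :=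
        fun j => Finset.exists_mem_eq_inf' (hne j) c
      choose af hafb hafeq using hamin
      set y₀ : Fin n → ℝ := fun i => ind ((¬ ∃ k ∈ bucket t (t i), x k = 1) ∧ i = af (t i))
        with hy₀
      have hy₀feas : FeasY t x y₀ := feasY_exists t hxfeas af hafb
      have hcoviff : ∀ j, (∃ k ∈ bucket t j, x k = 1) ↔ cov j := by
        intro j
        constructor
        · rintro ⟨k, hk, hk1⟩
          by_contra hc
          have : x k = 0 := by
            apply ind_neg
            rintro ⟨h1, _⟩
            rw [(mem_bucket t).mp hk] at h1
            exact hc h1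
          rw [this] at hk1
          norm_num at hk1
        · intro hc
          refine ⟨kf j, hkfb j, ?_⟩
          apply ind_pos
          rw [(mem_bucket t).mp (hkfb j)]
          exact ⟨hc, rfl⟩
      -- value of the canonical y₀
      have hzval : ∑ i, c i * y₀ i
          = ∑ j ∈ Finset.univ.filter (fun j => ¬ cov j), c (af j) := by
        have h1 : ∀ i, c i * y₀ i
            = ind ((¬ cov (t i)) ∧ i = af (t i)) * c i := by
          intro i
          rw [mul_comm]
          congr 1
          apply ind_congr
          constructor
          · rintro ⟨h1', h2'⟩
            exact ⟨fun he => h1' ((hcoviff (t i)).mpr he), h2'⟩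
          · rintro ⟨h1', h2'⟩
            exact ⟨fun he => h1' ((hcoviff (t i)).mp he), h2'⟩
        rw [Finset.sum_congr rfl (fun i _ => h1 i),
          sum_ind t (fun j => ¬ cov j) af hafb c]
        exact Finset.sum_congr (Finset.filter_congr_decidable _ _ _) (fun _ _ => rfl)
      have hwle : sInf (Zset t x c) ≤ ∑ i, c i * y₀ i :=
        csInf_le (Z_bddBelow t hc0) ⟨y₀, hy₀feas, rfl⟩
      -- bound via weak duality
      obtain ⟨δ, hδ01, hcδ, hδΓ⟩ := hcU
      have hbound : ∀ j ∈ Finset.univ.filter (fun j => ¬ cov j),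
          c (af j) ≤ fj t cl d j π + π * ∑ i ∈ bucket t j, δ i := by
        intro j _
        have h1 : (bucket t j).inf' (hne j) c
            = (bucket t j).inf' (hne j) (fun i => cl i + d i * δ i) := by
          apply Finset.inf'_congr _ rfl
          intro i _
          exact hcδ i
        rw [← hafeq j, h1]
        exact fj_weak t cl d hne hcl hd j hπ0 δ hδ01
      have hδsum : ∑ j ∈ Finset.univ.filter (fun j => ¬ cov j), ∑ i ∈ bucket t j, δ i ≤ Γ :=
        le_trans (sum_buckets_le t δ (fun i => (hδ01 i).1) _) hδΓ
      calc sInf (Zset t x c) ≤ ∑ i, c i * y₀ i := hwle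
      _ = ∑ j ∈ Finset.univ.filter (fun j => ¬ cov j), c (af j) := hzval
      _ ≤ ∑ j ∈ Finset.univ.filter (fun j => ¬ cov j),
            (fj t cl d j π + π * ∑ i ∈ bucket t j, δ i) := Finset.sum_le_sum hbound
      _ = (∑ j ∈ Finset.univ.filter (fun j => ¬ cov j), fj t cl d j π)
            + π * ∑ j ∈ Finset.univ.filter (fun j => ¬ cov j), ∑ i ∈ bucket t j, δ i := by
          rw [Finset.sum_add_distrib, Finset.mul_sum]
      _ ≤ Γ * π + ∑ j ∈ Finset.univ.filter (fun j => ¬ cov j), fj t cl d j π := by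
          have := mul_le_mul_of_nonneg_left hδsum hπ0
          nlinarith
    -- combine
    have hsplit : ∑ j : Fin m, min (minC j) (fj t cl d j π)
        = (∑ j ∈ Finset.univ.filter cov, minC j)
          + ∑ j ∈ Finset.univ.filter (fun j => ¬ cov j), fj t cl d j π := by
      rw [← Finset.sum_filter_add_sum_filter_not Finset.univ cov
        (fun j => min (minC j) (fj t cl d j π))]
      congr 1
      · apply Finset.sum_congr rfl
        intro j hj
        exact min_eq_left ((Finset.mem_filter.mp hj).2)
      · apply Finset.sum_congr rfl
        intro j hj
        have := (Finset.mem_filter.mp hj).2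
        exact min_eq_right (le_of_not_ge this)
    rw [hsplit, hCx]
    linarith
  · -- sInf R ≤ sInf L
    apply le_csInf hLne
    rintro val ⟨x, hx, rfl⟩
    set cov : Fin m → Prop := fun j => ∃ k ∈ bucket t j, x k = 1 with hcov
    set Junc : Finset (Fin m) := Finset.univ.filter (fun j => ¬ cov j) with hJunc
    obtain ⟨π, hπ0, hsd⟩ := strong_duality t cl d hne hcl hd Junc hΓ
    have hRmem : Γ * π + ∑ j, min (minC j) (fj t cl d j π) ∈ R := ⟨π, hπ0, rfl⟩
    refine le_trans (csInf_le ⟨0, hRlb⟩ hRmem) ?_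
    -- (i) split the min-sum
    have hsplit : ∑ j : Fin m, min (minC j) (fj t cl d j π)
        ≤ (∑ j ∈ Finset.univ.filter cov, minC j) + ∑ j ∈ Junc, fj t cl d j π := by
      rw [← Finset.sum_filter_add_sum_filter_not Finset.univ cov
        (fun j => min (minC j) (fj t cl d j π))]
      apply add_le_add
      · exact Finset.sum_le_sum fun j _ => min_le_left _ _
      · exact Finset.sum_le_sum fun j _ => min_le_right _ _
    -- (ii) first-stage cost bound
    have hCx : (∑ j ∈ Finset.univ.filter cov, minC j) ≤ ∑ i, C i * x i := by
      have hterm : ∀ j ∈ Finset.univ.filter cov, minC j ≤ ∑ i ∈ bucket t j, C i * x i := by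
        intro j hj
        obtain ⟨k, hk, hk1⟩ := (Finset.mem_filter.mp hj).2
        calc minC j ≤ C k := minC_le t C j ((mem_bucket t).mp hk)
        _ = C k * x k := by rw [hk1, mul_one]
        _ ≤ ∑ i ∈ bucket t j, C i * x i :=
            Finset.single_le_sum
              (fun i _ => mul_nonneg (hC i) (binary_nonneg hx.1 i)) hk
      calc ∑ j ∈ Finset.univ.filter cov, minC j
          ≤ ∑ j ∈ Finset.univ.filter cov, ∑ i ∈ bucket t j, C i * x i :=
            Finset.sum_le_sum hterm
      _ ≤ ∑ i, C i * x i :=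
          sum_buckets_le t _ (fun i => mul_nonneg (hC i) (binary_nonneg hx.1 i)) _
    -- (iii) adversary value bound
    have hFW : Fv t cl d hne Junc Γ ≤ sSup (Wset t cl d Γ x) := by
      apply csSup_le (FSet_nonempty t cl d hne Junc hΓ)
      rintro g ⟨δ, hδ01, hδΓ, rfl⟩
      set c : Fin n → ℝ := fun i => cl i + d i * δ i with hc
      have hcU : c ∈ UC cl d Γ := ⟨δ, hδ01, fun i => rfl, hδΓ⟩
      have hc0 : ∀ i, 0 ≤ c i := UC_nonneg cl d hcl hd hcU
      have hGZ : GG t cl d hne Junc δ ≤ sInf (Zset t x c) := by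
        apply le_csInf (Z_nonempty t hne hx c)
        rintro z ⟨y, hy, rfl⟩
        have hzero : ∀ j ∈ Junc, ∀ i ∈ bucket t j, x i = 0 := by
          intro j hj i hi
          have hnc := (Finset.mem_filter.mp hj).2
          rcases hx.1 i with h0 | h1
          · exact h0
          · exact absurd ⟨i, hi, h1⟩ hnc
        exact inner_lb t hne hc0 hy Junc hzero
      have hmem : sInf (Zset t x c) ∈ Wset t cl d Γ x := ⟨c, hcU, rfl⟩
      exact le_trans hGZ (le_csSup (W_bddAbove t cl d hne hcl hd hx) hmem)
    linarith
end
end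

section
/- The optimal value of the constructed two-stage representative selection instance with discrete budgeted uncertainty, min_{x∈X'} ( Σ_{i=1}^{2n} C_i x_i + max_{c∈U^D} min_{y∈Y(x)} Σ_{i=1}^{2n} c_i y_i ), is at most M + 3Q if and only if there exists a set I ⊆ [n] with Σ_{i∈I} a_i = Q. -/
open Classical
noncomputable section

namespace Partition2RSD

/-- `Q = (1/2) ∑_{i=1}^n a_i`. -/
def Q (n : ℕ) (a : ℕ → ℕ) : ℝ := (∑ i ∈ Finset.Icc 1 n, (a i : ℝ)) / 2

/-- First-stage costs of the constructed instance (items indexed by `1, …, 2n`;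
items `1, …, n` form bucket `T_1`, and item `n + j - 1` forms the singleton bucket `T_j`
for `j ∈ {2, …, n+1}`). -/
def C (n : ℕ) (a : ℕ → ℕ) (W : ℝ) (i : ℕ) : ℝ := if i ≤ n then W else (a (i - n) : ℝ)

/-- Lower second-stage costs `c̲` of the constructed instance. -/
def cl (n : ℕ) (M : ℝ) (i : ℕ) : ℝ := if i ≤ n then M else 0

/-- Deviations `d` of the constructed instance (so `c̄_i = c̲_i + d_i`). -/
def d (n : ℕ) (a : ℕ → ℕ) (i : ℕ) : ℝ :=
  if i ≤ n then 2 * Q n a else 2 * (a (i - n) : ℝ)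

/-- The set `X'` of feasible first-stage decisions: `x` binary with at most one item chosen
from each bucket. -/
def FeasX (n : ℕ) (x : ℕ → ℝ) : Prop :=
  (∀ i ∈ Finset.Icc 1 (2 * n), x i = 0 ∨ x i = 1) ∧
  (∑ i ∈ Finset.Icc 1 n, x i ≤ 1) ∧
  ∀ i ∈ Finset.Icc (n + 1) (2 * n), x i ≤ 1

/-- The set `Y(x)` of feasible second-stage decisions: `y` binary, exactly one item chosen
from each bucket in total, no item chosen twice. -/
def FeasY (n : ℕ) (x y : ℕ → ℝ) : Prop :=
  (∀ i ∈ Finset.Icc 1 (2 * n), y i = 0 ∨ y i = 1) ∧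
  (∑ i ∈ Finset.Icc 1 n, (x i + y i) = 1) ∧
  (∀ i ∈ Finset.Icc (n + 1) (2 * n), x i + y i = 1) ∧
  ∀ i ∈ Finset.Icc 1 (2 * n), x i + y i ≤ 1

/-- The discrete budgeted uncertainty set `U^D` with budget `Γ = n`. -/
def UD (n : ℕ) (a : ℕ → ℕ) (M : ℝ) : Set (ℕ → ℝ) :=
  {c | ∃ δ : ℕ → ℝ, (∀ i ∈ Finset.Icc 1 (2 * n), δ i = 0 ∨ δ i = 1) ∧
    (∀ i ∈ Finset.Icc 1 (2 * n), c i = cl n M i + d n a i * δ i) ∧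
    (∀ i ∈ Finset.Icc 1 (2 * n), 0 ≤ c i) ∧
    ∑ i ∈ Finset.Icc 1 (2 * n), δ i ≤ (n : ℝ)}

/-- The optimal value of the constructed two-stage representative selection instance with
discrete budgeted uncertainty. -/
def OptVal (n : ℕ) (a : ℕ → ℕ) (M W : ℝ) : ℝ :=
  sInf {val | ∃ x, FeasX n x ∧
    val = (∑ i ∈ Finset.Icc 1 (2 * n), C n a W i * x i) +
      sSup {w | ∃ c ∈ UD n a M,
        w = sInf {z | ∃ y, FeasY n x y ∧
          z = ∑ i ∈ Finset.Icc 1 (2 * n), c i * y i}}}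

/-!
A first-stage decision that buys an item of `T_1` already pays `W > M + 4Q`. Otherwise it buys
the singletons of some `S ⊆ [n]`, at price `a(S)`, and the recourse must take one item of `T_1`
and the singletons outside `S`. The adversary can either raise all of `T_1`, forcing `M + 2Q`,
or raise the singletons outside `S`, forcing `M + 2 a([n] \ S)`; conversely every scenario
leaves an item of `T_1` at cost `M` unless it spends the whole budget on `T_1`, in which case
the singletons stay free. Hence the decision costs
`a(S) + M + max (2Q, 4Q - 2a(S)) = M + 3Q + |a(S) - Q|`. As `2a(S)` and `2Q` are integers,
this is at most `M + 3Q` exactly when `a(S) = Q`, and at least `M + 3Q + 1/2` otherwise, which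
keeps the infimum away from `M + 3Q` when there is no partition.
-/

open Finset

theorem sum_Icc_one_two_mul {β : Type*} [AddCommMonoid β] (n : ℕ) (f : ℕ → β) :
    ∑ i ∈ Icc 1 (2 * n), f i = ∑ i ∈ Icc 1 n, f i + ∑ j ∈ Icc 1 n, f (n + j) := by
  have hshift : ∑ j ∈ Icc 1 n, f (n + j) = ∑ i ∈ Ioc n (n + n), f i := by
    rw [← sum_image fun _ _ _ _ h => add_left_cancel h, image_add_left_Icc,
      Icc_add_one_left_eq_Ioc]
  rw [hshift, two_mul]
  exact (sum_Ioc_consecutive f (Nat.zero_le n) (Nat.le_add_right n n)).symm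

theorem half_le_abs_sub_half {p q : ℕ} (h : (p : ℝ) ≠ q / 2) : 1 / 2 ≤ |(p : ℝ) - q / 2| := by
  have hpq : 2 * p ≠ q := fun e => h (by rw [← e]; push_cast; ring)
  rcases Nat.lt_or_gt_of_ne hpq with hlt | hgt
  · have : (2 * p + 1 : ℝ) ≤ q := by exact_mod_cast hlt
    exact le_abs.mpr (Or.inr (by linarith))
  · have : (q + 1 : ℝ) ≤ 2 * p := by exact_mod_cast hgt
    exact le_abs.mpr (Or.inl (by linarith))

def recourse (n : ℕ) (x c : ℕ → ℝ) : ℝ :=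
  sInf {z | ∃ y, FeasY n x y ∧ z = ∑ i ∈ Icc 1 (2 * n), c i * y i}

def worstRecourse (n : ℕ) (a : ℕ → ℕ) (M : ℝ) (x : ℕ → ℝ) : ℝ :=
  sSup {w | ∃ c ∈ UD n a M, w = recourse n x c}

def value (n : ℕ) (a : ℕ → ℕ) (M W : ℝ) (x : ℕ → ℝ) : ℝ :=
  ∑ i ∈ Icc 1 (2 * n), C n a W i * x i + worstRecourse n a M x

theorem OptVal_eq_sInf_value (n : ℕ) (a : ℕ → ℕ) (M W : ℝ) :
    OptVal n a M W = sInf {v | ∃ x, FeasX n x ∧ v = value n a M W x} :=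
  rfl

/-- The singletons bought in the first stage, indexed by `j` for the item `n + j`. -/
def picked (n : ℕ) (x : ℕ → ℝ) : Finset ℕ := (Icc 1 n).filter fun j => x (n + j) = 1

def singletonDecision (n : ℕ) (I : Finset ℕ) (i : ℕ) : ℝ := if n < i ∧ i - n ∈ I then 1 else 0

def scenario (n : ℕ) (a : ℕ → ℕ) (M : ℝ) (D : Finset ℕ) (i : ℕ) : ℝ :=
  cl n M i + d n a i * if i ∈ D then 1 else 0

section Instance

variable {n : ℕ} {a : ℕ → ℕ} {M W : ℝ} {x y c : ℕ → ℝ} {i j : ℕ}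

theorem Q_nonneg : 0 ≤ Q n a := by
  unfold Q; positivity

theorem sum_Icc_eq_two_mul_Q : ∑ i ∈ Icc 1 n, (a i : ℝ) = 2 * Q n a := by
  unfold Q; ring

theorem half_le_abs_sum_sub_Q {S : Finset ℕ} (h : ∑ j ∈ S, (a j : ℝ) ≠ Q n a) :
    1 / 2 ≤ |∑ j ∈ S, (a j : ℝ) - Q n a| := by
  have hQ : Q n a = ((∑ i ∈ Icc 1 n, a i : ℕ) : ℝ) / 2 := by unfold Q; push_cast; rfl
  rw [hQ, ← Nat.cast_sum] at h ⊢
  exact half_le_abs_sub_half h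

theorem mem_Icc_two_mul (hi : i ∈ Icc 1 n) : i ∈ Icc 1 (2 * n) := by
  simp only [mem_Icc] at *; omega

theorem add_mem_Icc_two_mul (hj : j ∈ Icc 1 n) : n + j ∈ Icc 1 (2 * n) := by
  simp only [mem_Icc] at *; omega

theorem add_mem_Icc_succ_two_mul (hj : j ∈ Icc 1 n) : n + j ∈ Icc (n + 1) (2 * n) := by
  simp only [mem_Icc] at *; omega

theorem C_of_le (hi : i ≤ n) : C n a W i = W := if_pos hi
theorem cl_of_le (hi : i ≤ n) : cl n M i = M := if_pos hi
theorem d_of_le (hi : i ≤ n) : d n a i = 2 * Q n a := if_pos hi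

theorem not_add_le_of_mem (hj : j ∈ Icc 1 n) : ¬ n + j ≤ n := by
  simp only [mem_Icc] at hj; omega

theorem C_add (hj : j ∈ Icc 1 n) : C n a W (n + j) = a j := by
  simp [C, not_add_le_of_mem hj]

theorem cl_add (hj : j ∈ Icc 1 n) : cl n M (n + j) = 0 := by
  simp [cl, not_add_le_of_mem hj]

theorem d_add (hj : j ∈ Icc 1 n) : d n a (n + j) = 2 * a j := by
  simp [d, not_add_le_of_mem hj]

theorem cl_nonneg (hM : 0 ≤ M) (i : ℕ) : 0 ≤ cl n M i := by
  unfold cl; split_ifs <;> simp [hM]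

theorem d_nonneg (i : ℕ) : 0 ≤ d n a i := by
  unfold d; split_ifs <;> positivity [Q_nonneg (n := n) (a := a)]

theorem picked_subset : picked n x ⊆ Icc 1 n := filter_subset _ _

theorem FeasX.apply_add (hx : FeasX n x) (hj : j ∈ Icc 1 n) :
    x (n + j) = if j ∈ picked n x then 1 else 0 := by
  rcases hx.1 _ (add_mem_Icc_two_mul hj) with h | h <;> simp [picked, hj, h]

theorem FeasY.apply_add (hx : FeasX n x) (hy : FeasY n x y) (hj : j ∈ Icc 1 n) :
    y (n + j) = if j ∈ picked n x then 0 else 1 := by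
  have hsum := hy.2.2.1 _ (add_mem_Icc_succ_two_mul hj)
  rw [hx.apply_add hj] at hsum
  split_ifs at hsum ⊢ <;> linarith

theorem FeasY.sum_eq_one (hx0 : ∀ i ∈ Icc 1 n, x i = 0) (hy : FeasY n x y) :
    ∑ i ∈ Icc 1 n, y i = 1 := by
  simpa [sum_add_distrib, sum_eq_zero hx0] using hy.2.1

theorem FeasY.cost_eq (hx : FeasX n x) (hy : FeasY n x y) (c : ℕ → ℝ) :
    ∑ i ∈ Icc 1 (2 * n), c i * y i
      = ∑ i ∈ Icc 1 n, c i * y i + ∑ j ∈ Icc 1 n \ picked n x, c (n + j) := by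
  rw [sum_Icc_one_two_mul, sum_sdiff_eq_sub picked_subset, picked, sum_filter,
    ← sum_sub_distrib]
  congr 1
  refine sum_congr rfl fun j hj => ?_
  rw [hy.apply_add hx hj]
  split_ifs <;> simp_all [picked]

theorem cost_nonneg (hc : c ∈ UD n a M) (hy : FeasY n x y) :
    0 ≤ ∑ i ∈ Icc 1 (2 * n), c i * y i := by
  obtain ⟨-, -, -, hc0, -⟩ := hc
  refine sum_nonneg fun i hi => ?_
  rcases hy.1 i hi with h | h <;> simp [h, hc0 i hi]

theorem recourse_nonneg (hc : c ∈ UD n a M) : 0 ≤ recourse n x c :=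
  Real.sInf_nonneg (by rintro _ ⟨y, hy, rfl⟩; exact cost_nonneg hc hy)

theorem worstRecourse_nonneg : 0 ≤ worstRecourse n a M x :=
  Real.sSup_nonneg (by rintro _ ⟨c, hc, rfl⟩; exact recourse_nonneg hc)

def recourseChoice (n : ℕ) (x : ℕ → ℝ) (i₀ : ℕ) (i : ℕ) : ℝ :=
  if i ≤ n then (if i = i₀ then 1 else 0) else 1 - x i

theorem feasY_recourseChoice (hx : FeasX n x) (hx0 : ∀ i ∈ Icc 1 n, x i = 0) {i₀ : ℕ}
    (hi₀ : i₀ ∈ Icc 1 n) : FeasY n x (recourseChoice n x i₀) := by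
  refine ⟨fun i hi => ?_, ?_, fun i hi => ?_, fun i hi => ?_⟩
  · unfold recourseChoice
    rcases hx.1 i hi with h | h <;> split_ifs <;> simp [h]
  · have hle : ∀ i ∈ Icc 1 n, i ≤ n := fun i hi => (mem_Icc.mp hi).2
    simp +contextual [recourseChoice, hx0, hle, hi₀]
  · have : ¬ i ≤ n := by simp only [mem_Icc] at hi; omega
    simp [recourseChoice, this]
  · by_cases h : i ≤ n
    · rw [hx0 i (mem_Icc.mpr ⟨(mem_Icc.mp hi).1, h⟩), zero_add]
      unfold recourseChoice
      split_ifs <;> norm_num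
    · simp [recourseChoice, h]

theorem recourse_le (hc : c ∈ UD n a M) (hx : FeasX n x) (hx0 : ∀ i ∈ Icc 1 n, x i = 0)
    {i₀ : ℕ} (hi₀ : i₀ ∈ Icc 1 n) :
    recourse n x c ≤ c i₀ + ∑ j ∈ Icc 1 n \ picked n x, c (n + j) := by
  have hy := feasY_recourseChoice hx hx0 hi₀
  have hle : ∀ i ∈ Icc 1 n, i ≤ n := fun i hi => (mem_Icc.mp hi).2
  calc recourse n x c ≤ ∑ i ∈ Icc 1 (2 * n), c i * recourseChoice n x i₀ i :=
        csInf_le ⟨0, by rintro _ ⟨y, hy, rfl⟩; exact cost_nonneg hc hy⟩ ⟨_, hy, rfl⟩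
    _ = c i₀ + ∑ j ∈ Icc 1 n \ picked n x, c (n + j) := by
        rw [hy.cost_eq hx]
        simp +contextual [recourseChoice, hle, hi₀]

theorem recourse_eq_of_forall_eq (hn : 1 ≤ n) (hx : FeasX n x)
    (hx0 : ∀ i ∈ Icc 1 n, x i = 0) {κ : ℝ} (hκ : ∀ i ∈ Icc 1 n, c i = κ) :
    recourse n x c = κ + ∑ j ∈ Icc 1 n \ picked n x, c (n + j) := by
  have hcost : ∀ y, FeasY n x y →
      ∑ i ∈ Icc 1 (2 * n), c i * y i = κ + ∑ j ∈ Icc 1 n \ picked n x, c (n + j) := by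
    intro y hy
    rw [hy.cost_eq hx, sum_congr rfl fun i hi => by rw [hκ i hi], ← mul_sum,
      hy.sum_eq_one hx0, mul_one]
  have hy := feasY_recourseChoice hx hx0 (mem_Icc.mpr ⟨le_rfl, hn⟩)
  have hset : {z | ∃ y, FeasY n x y ∧ z = ∑ i ∈ Icc 1 (2 * n), c i * y i}
      = {κ + ∑ j ∈ Icc 1 n \ picked n x, c (n + j)} :=
    Set.eq_singleton_iff_unique_mem.mpr
      ⟨⟨_, hy, (hcost _ hy).symm⟩, by rintro _ ⟨y, hy, rfl⟩; exact hcost y hy⟩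
  rw [recourse, hset, csInf_singleton]

theorem scenario_mem_UD (hM : 0 ≤ M) {D : Finset ℕ} (hD : D ⊆ Icc 1 (2 * n)) (hcard : #D ≤ n) :
    scenario n a M D ∈ UD n a M := by
  refine ⟨fun i => if i ∈ D then 1 else 0, fun i _ => by dsimp only; split_ifs <;> simp,
    fun i _ => rfl,
    fun i _ => add_nonneg (cl_nonneg hM i) (mul_nonneg (d_nonneg i) (by split_ifs <;> norm_num)),
    ?_⟩
  rw [sum_ite_mem, inter_eq_right.mpr hD, sum_const, nsmul_one]
  exact_mod_cast hcard

theorem recourse_scenario_Icc (hn : 1 ≤ n) (hx : FeasX n x) (hx0 : ∀ i ∈ Icc 1 n, x i = 0) :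
    recourse n x (scenario n a M (Icc 1 n)) = M + 2 * Q n a := by
  rw [recourse_eq_of_forall_eq hn hx hx0 (κ := M + 2 * Q n a), add_eq_left]
  · refine sum_eq_zero fun j hj => ?_
    have hj' : n + j ∉ Icc 1 n := fun h => not_add_le_of_mem (sdiff_subset hj) (mem_Icc.mp h).2
    simp [scenario, hj', cl_add (sdiff_subset hj)]
  · intro i hi
    simp [scenario, hi, cl_of_le (mem_Icc.mp hi).2, d_of_le (mem_Icc.mp hi).2]

theorem recourse_scenario_unpicked (hn : 1 ≤ n) (hx : FeasX n x)
    (hx0 : ∀ i ∈ Icc 1 n, x i = 0) :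
    recourse n x (scenario n a M ((Icc 1 n \ picked n x).image (n + ·)))
      = M + 2 * ∑ j ∈ Icc 1 n \ picked n x, (a j : ℝ) := by
  rw [recourse_eq_of_forall_eq hn hx hx0 (κ := M), mul_sum]
  · refine congrArg _ (sum_congr rfl fun j hj => ?_)
    have hj' := sdiff_subset hj
    simp [scenario, mem_image_of_mem (n + ·) hj, cl_add hj', d_add hj']
  · intro i hi
    have hi' : i ∉ (Icc 1 n \ picked n x).image (n + ·) := by
      simp only [mem_image, mem_sdiff, mem_Icc] at hi ⊢
      omega
    simp [scenario, hi', cl_of_le (mem_Icc.mp hi).2]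

theorem deviation_add_eq_zero {δ : ℕ → ℝ} (hδ : ∀ i ∈ Icc 1 (2 * n), δ i = 0 ∨ δ i = 1)
    (hbudget : ∑ i ∈ Icc 1 (2 * n), δ i ≤ n) (hall : ∀ i ∈ Icc 1 n, δ i = 1) :
    ∀ j ∈ Icc 1 n, δ (n + j) = 0 := by
  have hnonneg : ∀ j ∈ Icc 1 n, 0 ≤ δ (n + j) := fun j hj => by
    rcases hδ _ (add_mem_Icc_two_mul hj) with h | h <;> simp [h]
  rw [sum_Icc_one_two_mul, sum_congr rfl hall] at hbudget
  simp only [sum_const, Nat.card_Icc, add_tsub_cancel_right, nsmul_eq_mul, mul_one,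
    add_le_iff_nonpos_right] at hbudget
  exact (sum_eq_zero_iff_of_nonneg hnonneg).mp (le_antisymm hbudget (sum_nonneg hnonneg))

theorem exists_add_sum_le_of_mem_UD (hn : 1 ≤ n) (hc : c ∈ UD n a M) {R : Finset ℕ}
    (hR : R ⊆ Icc 1 n) :
    ∃ i₀ ∈ Icc 1 n,
      c i₀ + ∑ j ∈ R, c (n + j) ≤ M + max (2 * Q n a) (2 * ∑ j ∈ R, (a j : ℝ)) := by
  obtain ⟨δ, hδ, hcδ, -, hbudget⟩ := hc
  by_cases hall : ∀ i ∈ Icc 1 n, δ i = 1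
  · have h1 : 1 ∈ Icc 1 n := mem_Icc.mpr ⟨le_rfl, hn⟩
    have hzero := deviation_add_eq_zero hδ hbudget hall
    have hR0 : ∑ j ∈ R, c (n + j) = 0 := sum_eq_zero fun j hj => by
      rw [hcδ _ (add_mem_Icc_two_mul (hR hj)), hzero j (hR hj), cl_add (hR hj)]
      ring
    refine ⟨1, h1, ?_⟩
    rw [hR0, hcδ 1 (mem_Icc_two_mul h1), cl_of_le hn, d_of_le hn, hall 1 h1]
    linarith [le_max_left (2 * Q n a) (2 * ∑ j ∈ R, (a j : ℝ))]
  · simp only [not_forall] at hall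
    obtain ⟨i₀, hi₀, hδi₀⟩ := hall
    have hci₀ : c i₀ = M := by
      rw [hcδ _ (mem_Icc_two_mul hi₀), cl_of_le (mem_Icc.mp hi₀).2,
        (hδ _ (mem_Icc_two_mul hi₀)).resolve_right hδi₀]
      ring
    have hle : ∀ j ∈ R, c (n + j) ≤ 2 * a j := fun j hj => by
      rw [hcδ _ (add_mem_Icc_two_mul (hR hj)), cl_add (hR hj), d_add (hR hj)]
      rcases hδ _ (add_mem_Icc_two_mul (hR hj)) with h | h <;> simp [h]
    refine ⟨i₀, hi₀, ?_⟩
    rw [hci₀, mul_sum]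
    linarith [sum_le_sum hle, le_max_right (2 * Q n a) (∑ j ∈ R, 2 * (a j : ℝ))]

theorem worstRecourse_eq (hn : 1 ≤ n) (hM : 0 ≤ M) (hx : FeasX n x)
    (hx0 : ∀ i ∈ Icc 1 n, x i = 0) :
    worstRecourse n a M x
      = M + max (2 * Q n a) (2 * ∑ j ∈ Icc 1 n \ picked n x, (a j : ℝ)) := by
  have hub : ∀ w ∈ {w | ∃ c ∈ UD n a M, w = recourse n x c},
      w ≤ M + max (2 * Q n a) (2 * ∑ j ∈ Icc 1 n \ picked n x, (a j : ℝ)) := by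
    rintro _ ⟨c, hc, rfl⟩
    obtain ⟨i₀, hi₀, hle⟩ := exists_add_sum_le_of_mem_UD hn hc sdiff_subset
    exact (recourse_le hc hx hx0 hi₀).trans hle
  have hscenario : ∀ D ⊆ Icc 1 (2 * n), #D ≤ n →
      recourse n x (scenario n a M D) ≤ worstRecourse n a M x :=
    fun D hD hcard => le_csSup ⟨_, hub⟩ ⟨_, scenario_mem_UD hM hD hcard, rfl⟩
  refine le_antisymm (csSup_le ⟨_, _, scenario_mem_UD hM (empty_subset _) (by simp), rfl⟩ hub) ?_
  rw [add_max]
  refine max_le ?_ ?_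
  · rw [← recourse_scenario_Icc hn hx hx0]
    exact hscenario _ (fun i hi => mem_Icc_two_mul hi) (by simp)
  · rw [← recourse_scenario_unpicked hn hx hx0]
    refine hscenario _ (fun i hi => ?_) (card_image_le.trans ((card_le_card sdiff_subset).trans
      (by simp)))
    obtain ⟨j, hj, rfl⟩ := mem_image.mp hi
    exact add_mem_Icc_two_mul (sdiff_subset hj)

theorem firstStage_eq (hx : FeasX n x) (hx0 : ∀ i ∈ Icc 1 n, x i = 0) :
    ∑ i ∈ Icc 1 (2 * n), C n a W i * x i = ∑ j ∈ picked n x, (a j : ℝ) := by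
  rw [sum_Icc_one_two_mul, sum_eq_zero fun i hi => by rw [hx0 i hi, mul_zero], zero_add, picked,
    sum_filter]
  refine sum_congr rfl fun j hj => ?_
  rcases hx.1 _ (add_mem_Icc_two_mul hj) with h | h <;> simp [h, C_add hj]

theorem value_eq (hn : 1 ≤ n) (hM : 0 ≤ M) (hx : FeasX n x) (hx0 : ∀ i ∈ Icc 1 n, x i = 0) :
    value n a M W x = M + 3 * Q n a + |∑ j ∈ picked n x, (a j : ℝ) - Q n a| := by
  rw [value, firstStage_eq hx hx0, worstRecourse_eq hn hM hx hx0, sum_sdiff_eq_sub picked_subset,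
    sum_Icc_eq_two_mul_Q]
  rcases le_total (∑ j ∈ picked n x, (a j : ℝ)) (Q n a) with h | h
  · rw [abs_of_nonpos (sub_nonpos.mpr h), max_eq_right (by linarith)]
    ring
  · rw [abs_of_nonneg (sub_nonneg.mpr h), max_eq_left (by linarith)]
    ring

theorem W_le_value (hW : 0 ≤ W) (hx : FeasX n x) (hi : i ∈ Icc 1 n) (hxi : x i ≠ 0) :
    W ≤ value n a M W x := by
  have hterm : ∀ k ∈ Icc 1 (2 * n), 0 ≤ C n a W k * x k := fun k hk => by
    have hC : 0 ≤ C n a W k := by unfold C; split_ifs <;> positivity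
    rcases hx.1 k hk with h | h <;> simp [h, hC]
  have hfirst := single_le_sum hterm (mem_Icc_two_mul hi)
  rw [(hx.1 i (mem_Icc_two_mul hi)).resolve_left hxi, mul_one, C_of_le (mem_Icc.mp hi).2]
    at hfirst
  unfold value
  linarith [worstRecourse_nonneg (n := n) (a := a) (M := M) (x := x)]

theorem value_cases (hn : 1 ≤ n) (hM : 0 ≤ M) (hW : 0 ≤ W) (hx : FeasX n x) :
    W ≤ value n a M W x ∨
      ∃ S ⊆ Icc 1 n, value n a M W x = M + 3 * Q n a + |∑ j ∈ S, (a j : ℝ) - Q n a| := by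
  by_cases hx0 : ∀ i ∈ Icc 1 n, x i = 0
  · exact Or.inr ⟨picked n x, picked_subset, value_eq hn hM hx hx0⟩
  · simp only [not_forall] at hx0
    obtain ⟨i, hi, hxi⟩ := hx0
    exact Or.inl (W_le_value hW hx hi hxi)

theorem singletonDecision_eq_zero {I : Finset ℕ} (hi : i ∈ Icc 1 n) :
    singletonDecision n I i = 0 := by
  have : ¬ n < i := by simp only [mem_Icc] at hi; omega
  simp [singletonDecision, this]

theorem feasX_singletonDecision (I : Finset ℕ) : FeasX n (singletonDecision n I) := by
  refine ⟨fun i _ => ?_, ?_, fun i _ => ?_⟩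
  · unfold singletonDecision; split_ifs <;> simp
  · rw [sum_eq_zero fun i hi => singletonDecision_eq_zero hi]
    exact zero_le_one
  · unfold singletonDecision; split_ifs <;> norm_num

theorem picked_singletonDecision {I : Finset ℕ} (hI : I ⊆ Icc 1 n) :
    picked n (singletonDecision n I) = I := by
  ext j
  have hIj : j ∈ I → 1 ≤ j ∧ j ≤ n := fun hj => mem_Icc.mp (hI hj)
  simp only [picked, singletonDecision, lt_add_iff_pos_right, add_tsub_cancel_left,
    ite_eq_left_iff, not_and, zero_ne_one, imp_false, Classical.not_imp, Decidable.not_not,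
    mem_filter, mem_Icc]
  exact ⟨fun h => h.2.2, fun hj => ⟨hIj hj, (hIj hj).1, hj⟩⟩

end Instance

/-- The optimal value of the constructed (2RS-D) instance is at most `M + 3Q` if and only if
the partition instance is a yes-instance. -/
theorem stmt19 (n : ℕ) (hn : 1 ≤ n) (a : ℕ → ℕ) (M W : ℝ)
    (hM : 2 * Q n a < M) (hW : M + 4 * Q n a < W) :
    OptVal n a M W ≤ M + 3 * Q n a ↔
      ∃ I : Finset ℕ, I ⊆ Finset.Icc 1 n ∧ (∑ i ∈ I, (a i : ℝ)) = Q n a := by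
  have hQ : 0 ≤ Q n a := Q_nonneg
  have hM0 : 0 ≤ M := by linarith
  have hW0 : 0 ≤ W := by linarith
  rw [OptVal_eq_sInf_value]
  set V := {v | ∃ x, FeasX n x ∧ v = value n a M W x}
  constructor
  · intro hopt
    by_contra hno
    have hgap : ∀ S ⊆ Icc 1 n, 1 / 2 ≤ |∑ j ∈ S, (a j : ℝ) - Q n a| :=
      fun S hS => half_le_abs_sum_sub_Q fun h => hno ⟨S, hS, h⟩
    have hQ2 : 1 / 2 ≤ Q n a := by simpa [abs_of_nonneg hQ] using hgap ∅ (empty_subset _)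
    have hlower : ∀ v ∈ V, M + 3 * Q n a + 1 / 2 ≤ v := by
      rintro _ ⟨x, hx, rfl⟩
      rcases value_cases hn hM0 hW0 hx with hWv | ⟨S, hS, hv⟩
      · linarith
      · linarith [hgap S hS]
    have hne : V.Nonempty := ⟨_, _, feasX_singletonDecision ∅, rfl⟩
    linarith [le_csInf hne hlower]
  · rintro ⟨I, hI, hIQ⟩
    have hbdd : BddBelow V := by
      refine ⟨M + 3 * Q n a, ?_⟩
      rintro _ ⟨x, hx, rfl⟩
      rcases value_cases hn hM0 hW0 hx with hWv | ⟨S, -, hv⟩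
      · linarith
      · linarith [abs_nonneg (∑ j ∈ S, (a j : ℝ) - Q n a)]
    have hx := feasX_singletonDecision (n := n) I
    calc sInf V ≤ value n a M W (singletonDecision n I) := csInf_le hbdd ⟨_, hx, rfl⟩
      _ = M + 3 * Q n a := by
        rw [value_eq hn hM0 hx fun i hi => singletonDecision_eq_zero hi,
          picked_singletonDecision hI, hIQ, sub_self, abs_zero, add_zero]

end Partition2RSD
end
end
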